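/- arXiv:2603.23046 — 6 statements merged into one kernel-verified Lean document; each statement's English description precedes it below -/
import Mathlib

section
/- Let (h_k)_{k≥1} be a sequence of vectors in ℝ^n and (b_k)_{k≥1} a sequence of real numbers with 0 ≤ b_k < 1 for all k. If there is a constant C such that ‖h_{k+1} + Σ_{i=1}^{k} b_i h_i‖ ≤ C for every k ≥ 1, then the sequence (h_k) is bounded, i.e. sup_{k≥1} ‖h_k‖ < +∞. -/
open Filter Topology
open scoped RealInnerProductSpace

theorem boundedness_of_controlled_sums
    {n : ℕ} (h : ℕ → EuclideanSpace ℝ (Fin n)) (bseq : ℕ → ℝ)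
    (hb : ∀ k, 1 ≤ k → 0 ≤ bseq k ∧ bseq k < 1)
    (C : ℝ)
    (hC : ∀ k : ℕ, 1 ≤ k → ‖h (k + 1) + ∑ i ∈ Finset.Icc 1 k, bseq i • h i‖ ≤ C) :
    ∃ M : ℝ, ∀ k, 1 ≤ k → ‖h k‖ ≤ M := by
  set S : ℕ → EuclideanSpace ℝ (Fin n) := fun k => ∑ i ∈ Finset.Icc 1 k, bseq i • h i with hS
  have key : ∀ k, 1 ≤ k → ‖S k‖ ≤ max ‖S 1‖ C := by
    intro k hk
    induction k with
    | zero => omega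
    | succ k ih =>
      rcases Nat.eq_zero_or_pos k with rfl | hkpos
      · exact le_max_left _ _
      · have ihk := ih hkpos
        obtain ⟨hb0, hb1⟩ := hb (k+1) (by omega)
        have hg : ‖h (k+1) + S k‖ ≤ C := hC k hkpos
        have hsum : S (k+1) = S k + bseq (k+1) • h (k+1) := by
          simp only [hS]
          rw [Finset.sum_Icc_succ_top (by omega : 1 ≤ k+1)]
        have hdecomp : S (k+1) = (1 - bseq (k+1)) • S k + bseq (k+1) • (h (k+1) + S k) := by
          rw [hsum]; module
        rw [hdecomp]
        calc ‖(1 - bseq (k+1)) • S k + bseq (k+1) • (h (k+1) + S k)‖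
            ≤ ‖(1 - bseq (k+1)) • S k‖ + ‖bseq (k+1) • (h (k+1) + S k)‖ := norm_add_le _ _
          _ = (1 - bseq (k+1)) * ‖S k‖ + bseq (k+1) * ‖h (k+1) + S k‖ := by
              rw [norm_smul, norm_smul, Real.norm_eq_abs, Real.norm_eq_abs,
                abs_of_nonneg (by linarith), abs_of_nonneg hb0]
          _ ≤ max ‖S 1‖ C := by
              have h1 : ‖S k‖ ≤ max ‖S 1‖ C := ihk
              have h2 : ‖h (k+1) + S k‖ ≤ max ‖S 1‖ C := hg.trans (le_max_right _ _)
              nlinarith [norm_nonneg (S k), norm_nonneg (h (k+1) + S k)]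
  refine ⟨max ‖h 1‖ (C + max ‖S 1‖ C), fun k hk => ?_⟩
  rcases Nat.lt_or_ge k 2 with hk2 | hk2
  · interval_cases k
    exact le_max_left _ _
  · obtain ⟨m, rfl⟩ : ∃ m, k = m + 1 := ⟨k - 1, by omega⟩
    have hm : 1 ≤ m := by omega
    have hg : ‖h (m+1) + S m‖ ≤ C := hC m hm
    have : h (m+1) = (h (m+1) + S m) - S m := by abel
    rw [this]
    calc ‖(h (m+1) + S m) - S m‖ ≤ ‖h (m+1) + S m‖ + ‖S m‖ := norm_sub_le _ _
      _ ≤ C + max ‖S 1‖ C := add_le_add hg (key m hm)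
      _ ≤ _ := le_max_right _ _
end

section
/- Suppose Assumption 2 holds, f ∈ S⁰_{μ_f}(X) and g ∈ S⁰_{μ_g}(Y) with μ_f, μ_g ≥ 0, β_k → ∞, (ε_k) is nonincreasing with ε_k ≥ 0 and Σ_{k=1}^{∞} α_kβ_kε_k < +∞, and let (x_k, y_k, λ_k) be generated by the scheme (disc) with the semi-implicit multiplier choice λ̄_{k+1} = λ_k + α_kβ_k(AZ^δ_{k+1} + BH^δ_k − b) and λ̂_{k+1} = λ_{k+1} (Algorithm 2). Let (x*,y*,λ*) be a saddle point of L. Then the sequence (x_k, y_k, λ_k) is bounded, and there exists a constant C > 0 such that for all k ≥ 1: L(x_k, y_k, λ*) − L(x*, y*, λ*) ≤ C/β_k, |Φ(x_k, y_k) − Φ(x*, y*)| ≤ C/β_k, and ‖Ax_k + By_k − b‖ ≤ C/β_k. -/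
open Filter Topology
open scoped RealInnerProductSpace


private lemma inner_self_sub_aux {E : Type*} [NormedAddCommGroup E] [InnerProductSpace ℝ E]
    (a c : E) : ⟪a, a - c⟫ = (‖a‖^2 - ‖c‖^2 + ‖a - c‖^2)/2 := by
  have h := norm_sub_sq_real a (a - c)
  have e : a - (a - c) = c := by abel
  rw [e] at h
  linarith

private lemma inner_le_half_aux {E : Type*} [NormedAddCommGroup E] [InnerProductSpace ℝ E]
    (a c : E) : ⟪a, c⟫ ≤ ‖a‖^2/2 + ‖c‖^2/2 := by
  have h := norm_sub_sq_real a c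
  nlinarith [sq_nonneg ‖a - c‖]

set_option maxHeartbeats 12000000 in
theorem convergence_rates_algorithm2
    {X Y Z : Type*}
    [NormedAddCommGroup X] [InnerProductSpace ℝ X] [CompleteSpace X]
    [NormedAddCommGroup Y] [InnerProductSpace ℝ Y] [CompleteSpace Y]
    [NormedAddCommGroup Z] [InnerProductSpace ℝ Z] [CompleteSpace Z]
    (f : X → ℝ) (g : Y → ℝ)
    (hfconv : ConvexOn ℝ Set.univ f) (hfcont : Continuous f)
    (hgconv : ConvexOn ℝ Set.univ g) (hgcont : Continuous g)
    (A : X →L[ℝ] Z) (B : Y →L[ℝ] Z) (b : Z)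
    (μf μg : ℝ) (hμf : 0 ≤ μf) (hμg : 0 ≤ μg)
    (hfS : ∀ x u v : X, (∀ w, f w - f x ≥ ⟪v, w - x⟫) →
        f u - f x - ⟪v, u - x⟫ ≥ μf / 2 * ‖u - x‖ ^ 2)
    (hgS : ∀ y u v : Y, (∀ w, g w - g y ≥ ⟪v, w - y⟫) →
        g u - g y - ⟪v, u - y⟫ ≥ μg / 2 * ‖u - y‖ ^ 2)
    (L : X → Y → Z → ℝ)
    (hL : ∀ x y l, L x y l = f x + g y + ⟪l, A x + B y - b⟫)
    (δ γ : ℝ) (hδ : 0 < δ) (hγ : 0 < γ)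
    (α β ε : ℕ → ℝ)
    (hα : ∀ k, 1 ≤ k → 0 < α k)
    (hβpos : ∀ k, 1 ≤ k → 0 < β k)
    (hβmono : ∀ k, 1 ≤ k → β k ≤ β (k + 1))
    (hεnn : ∀ k, 1 ≤ k → 0 ≤ ε k)
    (hβtop : Tendsto β atTop atTop)
    (x : ℕ → X) (y : ℕ → Y) (lam : ℕ → Z)
    (Zs Zd : ℕ → X) (Hs Hd : ℕ → Y)
    (hZ : ∀ k, 1 ≤ k → Zs (k + 1) = (1 / α k) • (x (k + 1) - x k) + γ • x (k + 1))
    (hZd : ∀ k, 1 ≤ k → Zd (k + 1) = δ • Zs (k + 1) + (1 - δ * γ) • x (k + 1))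
    (hH : ∀ k, 1 ≤ k → Hs (k + 1) = (1 / α k) • (y (k + 1) - y k) + γ • y (k + 1))
    (hHd : ∀ k, 1 ≤ k → Hd (k + 1) = δ • Hs (k + 1) + (1 - δ * γ) • y (k + 1))
    (hlam : ∀ k, 1 ≤ k → lam (k + 1) = lam k + (α k * β k) • (A (Zd (k + 1)) + B (Hd (k + 1)) - b))
    (hstep : ∀ k, 1 ≤ k → ∃ u v,
        (∀ w, f w - f (x (k + 1)) ≥ ⟪u, w - x (k + 1)⟫) ∧
        (∀ w, g w - g (y (k + 1)) ≥ ⟪v, w - y (k + 1)⟫) ∧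
        (1 / α k) • (Zs (k + 1) - Zs k) =
          -(β k • (u + (ContinuousLinearMap.adjoint A) (lam k + (α k * β k) • (A (Zd (k + 1)) + B (Hd k) - b)) + ε k • x (k + 1)
              - μf • (x (k + 1) - Zd (k + 1)))) ∧
        (1 / α k) • (Hs (k + 1) - Hs k) =
          -(β k • (v + (ContinuousLinearMap.adjoint B) (lam (k + 1)) + ε k • y (k + 1)
              - μg • (y (k + 1) - Hd (k + 1)))))
    (hδγ : δ * γ - 1 ≥ 0)
    (hββ : ∀ k, 1 ≤ k → δ * β (k + 1) ≤ δ * β k + α k * β k)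
    (hB2 : ∀ k, 1 ≤ k →
        ‖B‖ ^ 2 * ((α (k + 1)) ^ 2 * (β (k + 1)) ^ 2 - (α k) ^ 2 * (β k) ^ 2) ≤ α k * β k * μg)
    (hεmono : ∀ k, 1 ≤ k → ε (k + 1) ≤ ε k)
    (hsum : Summable (fun k => α k * β k * ε k))
    (xs : X) (ys : Y) (ls : Z)
    (hsaddle : ∀ x' y' l', L xs ys l' ≤ L xs ys ls ∧ L xs ys ls ≤ L x' y' ls)
    :
    (∃ M : ℝ, ∀ k, 1 ≤ k → ‖x k‖ ≤ M ∧ ‖y k‖ ≤ M ∧ ‖lam k‖ ≤ M) ∧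
    ∃ C : ℝ, 0 < C ∧ ∀ k, 1 ≤ k →
      L (x k) (y k) ls - L xs ys ls ≤ C / β k ∧
      |f (x k) + g (y k) - (f xs + g ys)| ≤ C / β k ∧
      ‖A (x k) + B (y k) - b‖ ≤ C / β k := by
  classical
  obtain ⟨s, hs⟩ : ∃ s : ℕ → Z, ∀ k, s k = A (x k) + B (y k) - b := ⟨_, fun k => rfl⟩
  obtain ⟨V, hV⟩ : ∃ V : ℕ → ℝ, ∀ k, V k = f (x k) + g (y k) - f xs - g ys + ⟪ls, s k⟫ :=
    ⟨_, fun k => rfl⟩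
  obtain ⟨θ, hθ⟩ : ∃ θ : ℕ → ℝ, ∀ k, θ k = α k * β k := ⟨_, fun k => rfl⟩
  -- saddle: feasibility of (xs,ys)
  have hAb : A xs + B ys - b = 0 := by
    have h := (hsaddle xs ys (ls + (A xs + B ys - b))).1
    rw [hL, hL] at h
    have hexp : ⟪ls + (A xs + B ys - b), A xs + B ys - b⟫
        = ⟪ls, A xs + B ys - b⟫ + ⟪A xs + B ys - b, A xs + B ys - b⟫ := inner_add_left _ _ _
    have h2 : ⟪A xs + B ys - b, A xs + B ys - b⟫ ≤ 0 := by linarith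
    have h3 : ‖A xs + B ys - b‖^2 ≤ 0 := by rw [← real_inner_self_eq_norm_sq]; exact h2
    have h4 : ‖A xs + B ys - b‖ = 0 := by nlinarith [norm_nonneg (A xs + B ys - b)]
    exact norm_eq_zero.mp h4
  have hLs : L xs ys ls = f xs + g ys := by
    rw [hL, hAb]; simp
  have hVL : ∀ k, V k = L (x k) (y k) ls - L xs ys ls := by
    intro k; rw [hL, hLs, hV, hs]; ring
  have hVnn : ∀ k, 0 ≤ V k := by
    intro k
    have := (hsaddle (x k) (y k) ls).2
    rw [hVL k]; linarith
  -- energy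
  obtain ⟨P, hP⟩ : ∃ P : ℕ → X, ∀ k, P k = Zd k - xs := ⟨_, fun k => rfl⟩
  obtain ⟨Q, hQ⟩ : ∃ Q : ℕ → Y, ∀ k, Q k = Hd k - ys := ⟨_, fun k => rfl⟩
  obtain ⟨E, hE⟩ : ∃ E : ℕ → ℝ, ∀ k, E k = δ^2 * β k * V k
      + δ^2/2 * (β k * ε k) * (‖x k‖^2 + ‖y k‖^2)
      + 1/2 * ‖P k‖^2 + 1/2 * ‖Q k‖^2 + δ/2 * ‖lam k - ls‖^2
      + (δ*γ-1)/2 * (‖x k - xs‖^2 + ‖y k - ys‖^2)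
      + δ/2 * (θ k)^2 * ‖B (Q k)‖^2 := ⟨_, fun k => rfl⟩
  -- structure of P (k+1), Q (k+1)
  have hPstruct : ∀ k, 1 ≤ k → P (k+1) = (x (k+1) - xs) + (δ / α k) • (x (k+1) - x k) := by
    intro k hk
    have hα' := (hα k hk).ne'
    rw [hP, hZd k hk, hZ k hk]
    match_scalars <;> field_simp <;> ring
  have hQstruct : ∀ k, 1 ≤ k → Q (k+1) = (y (k+1) - ys) + (δ / α k) • (y (k+1) - y k) := by
    intro k hk
    have hα' := (hα k hk).ne'
    rw [hQ, hHd k hk, hH k hk]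
    match_scalars <;> field_simp <;> ring
  have hEstep : ∀ k, 2 ≤ k → E (k+1) ≤ E k + δ/2 * (θ k * ε k) * (‖xs‖^2 + ‖ys‖^2) := by
    intro k hk
    obtain ⟨m, rfl⟩ : ∃ m, k = m + 2 := ⟨k - 2, by omega⟩
    have e3 : m+2+1 = m+3 := rfl
    have e2 : m+1+1 = m+2 := rfl
    have ha : 0 < α (m+2) := hα _ (by omega)
    have hb0 : 0 < β (m+2) := hβpos _ (by omega)
    have hb1 : 0 < β (m+3) := hβpos _ (by omega)
    have hρpos : 0 < δ / α (m+2) := div_pos hδ ha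
    have hθ0 : θ (m+2) = α (m+2) * β (m+2) := hθ _
    have hθpos : 0 < θ (m+2) := by rw [hθ0]; positivity
    have hεk : 0 ≤ ε (m+2) := hεnn _ (by omega)
    have hεk' : 0 ≤ ε (m+3) := hεnn _ (by omega)
    obtain ⟨u, v, hu, hv, hxeq, hyeq⟩ := hstep (m+2) (by omega)
    rw [e3] at hu hv hxeq hyeq
    obtain ⟨lb, hlb⟩ : ∃ lb, lb = lam (m+2) + (α (m+2) * β (m+2)) • (A (Zd (m+3)) + B (Hd (m+2)) - b) :=
      ⟨_, rfl⟩
    rw [← hlb] at hxeq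
    have hp1 : P (m+3) = (x (m+3) - xs) + (δ / α (m+2)) • (x (m+3) - x (m+2)) := by
      have := hPstruct (m+2) (by omega); rw [e3] at this; exact this
    have hq1 : Q (m+3) = (y (m+3) - ys) + (δ / α (m+2)) • (y (m+3) - y (m+2)) := by
      have := hQstruct (m+2) (by omega); rw [e3] at this; exact this
    have hZd2 : Zd (m+2) = δ • Zs (m+2) + (1 - δ * γ) • x (m+2) := by
      have := hZd (m+1) (by omega); rw [e2] at this; exact this
    have hZd3 : Zd (m+3) = δ • Zs (m+3) + (1 - δ * γ) • x (m+3) := by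
      have := hZd (m+2) (by omega); rw [e3] at this; exact this
    have hZ3 : Zs (m+3) = (1 / α (m+2)) • (x (m+3) - x (m+2)) + γ • x (m+3) := by
      have := hZ (m+2) (by omega); rw [e3] at this; exact this
    have hHd2 : Hd (m+2) = δ • Hs (m+2) + (1 - δ * γ) • y (m+2) := by
      have := hHd (m+1) (by omega); rw [e2] at this; exact this
    have hHd3 : Hd (m+3) = δ • Hs (m+3) + (1 - δ * γ) • y (m+3) := by
      have := hHd (m+2) (by omega); rw [e3] at this; exact this
    have hH3 : Hs (m+3) = (1 / α (m+2)) • (y (m+3) - y (m+2)) + γ • y (m+3) := by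
      have := hH (m+2) (by omega); rw [e3] at this; exact this
    have hlam3 : lam (m+3) = lam (m+2) + (α (m+2) * β (m+2)) • (A (Zd (m+3)) + B (Hd (m+3)) - b) := by
      have := hlam (m+2) (by omega); rw [e3] at this; exact this
    -- x (m+3) - Zd (m+3) in terms of dx
    have hxZd : x (m+3) - Zd (m+3) = (-(δ / α (m+2))) • (x (m+3) - x (m+2)) := by
      rw [hZd3, hZ3]
      match_scalars <;> field_simp <;> ring
    have hyHd : y (m+3) - Hd (m+3) = (-(δ / α (m+2))) • (y (m+3) - y (m+2)) := by
      rw [hHd3, hH3]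
      match_scalars <;> field_simp <;> ring
    -- update identities for Zs, Hs differences
    have hZsdiff : Zs (m+3) - Zs (m+2)
        = (-(θ (m+2))) • (u + (ContinuousLinearMap.adjoint A) lb + ε (m+2) • x (m+3)
            - μf • (x (m+3) - Zd (m+3))) := by
      have h2 : α (m+2) • ((1 / α (m+2)) • (Zs (m+3) - Zs (m+2))) = Zs (m+3) - Zs (m+2) := by
        rw [smul_smul, mul_one_div, div_self ha.ne', one_smul]
      rw [← h2, hxeq, hθ0]
      match_scalars <;> ring
    have hHsdiff : Hs (m+3) - Hs (m+2)
        = (-(θ (m+2))) • (v + (ContinuousLinearMap.adjoint B) (lam (m+3)) + ε (m+2) • y (m+3)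
            - μg • (y (m+3) - Hd (m+3))) := by
      have h2 : α (m+2) • ((1 / α (m+2)) • (Hs (m+3) - Hs (m+2))) = Hs (m+3) - Hs (m+2) := by
        rw [smul_smul, mul_one_div, div_self ha.ne', one_smul]
      rw [← h2, hyeq, hθ0]
      match_scalars <;> ring
    -- difference of P, Q
    have hdP : P (m+3) - P (m+2)
        = δ • (Zs (m+3) - Zs (m+2)) + (1 - δ*γ) • (x (m+3) - x (m+2)) := by
      rw [hP, hP, hZd3, hZd2]; module
    have hdQ : Q (m+3) - Q (m+2)
        = δ • (Hs (m+3) - Hs (m+2)) + (1 - δ*γ) • (y (m+3) - y (m+2)) := by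
      rw [hQ, hQ, hHd3, hHd2]; module
    -- half-square bounds
    have hsqP : 1/2*‖P (m+3)‖^2 - 1/2*‖P (m+2)‖^2 ≤ ⟪P (m+3), P (m+3) - P (m+2)⟫ := by
      have h := norm_sub_sq_real (P (m+3)) (P (m+3) - P (m+2))
      have e : P (m+3) - (P (m+3) - P (m+2)) = P (m+2) := by abel
      rw [e] at h
      linarith only [h, sq_nonneg ‖P (m+3) - P (m+2)‖]
    have hsqQ : 1/2*‖Q (m+3)‖^2 - 1/2*‖Q (m+2)‖^2 ≤ ⟪Q (m+3), Q (m+3) - Q (m+2)⟫ := by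
      have h := norm_sub_sq_real (Q (m+3)) (Q (m+3) - Q (m+2))
      have e : Q (m+3) - (Q (m+3) - Q (m+2)) = Q (m+2) := by abel
      rw [e] at h
      linarith only [h, sq_nonneg ‖Q (m+3) - Q (m+2)‖]
    -- inner product expansion of the updates
    have hdPinner : ⟪P (m+3), P (m+3) - P (m+2)⟫
        = -(δ*θ (m+2))*⟪P (m+3), u⟫ - (δ*θ (m+2))*⟪A (P (m+3)), lb⟫
          - (δ*θ (m+2)*ε (m+2))*⟪P (m+3), x (m+3)⟫
          - (δ*θ (m+2)*μf*(δ/α (m+2)))*⟪P (m+3), x (m+3) - x (m+2)⟫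
          + (1-δ*γ)*⟪P (m+3), x (m+3) - x (m+2)⟫ := by
      rw [hdP, hZsdiff, hxZd]
      simp only [inner_add_right, inner_sub_right, real_inner_smul_right,
        ContinuousLinearMap.adjoint_inner_right]
      ring
    have hdQinner : ⟪Q (m+3), Q (m+3) - Q (m+2)⟫
        = -(δ*θ (m+2))*⟪Q (m+3), v⟫ - (δ*θ (m+2))*⟪B (Q (m+3)), lam (m+3)⟫
          - (δ*θ (m+2)*ε (m+2))*⟪Q (m+3), y (m+3)⟫
          - (δ*θ (m+2)*μg*(δ/α (m+2)))*⟪Q (m+3), y (m+3) - y (m+2)⟫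
          + (1-δ*γ)*⟪Q (m+3), y (m+3) - y (m+2)⟫ := by
      rw [hdQ, hHsdiff, hyHd]
      simp only [inner_add_right, inner_sub_right, real_inner_smul_right,
        ContinuousLinearMap.adjoint_inner_right]
      ring
    -- expansions of P (m+3) inner products
    have expP1 : ⟪P (m+3), u⟫ = ⟪u, x (m+3) - xs⟫ + (δ/α (m+2))*⟪u, x (m+3) - x (m+2)⟫ := by
      rw [real_inner_comm, hp1, inner_add_right, real_inner_smul_right]
    have expQ1 : ⟪Q (m+3), v⟫ = ⟪v, y (m+3) - ys⟫ + (δ/α (m+2))*⟪v, y (m+3) - y (m+2)⟫ := by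
      rw [real_inner_comm, hq1, inner_add_right, real_inner_smul_right]
    have expP2 : ‖P (m+3)‖^2 = ‖x (m+3) - xs‖^2
        + 2*(δ/α (m+2))*⟪x (m+3) - xs, x (m+3) - x (m+2)⟫
        + (δ/α (m+2))^2*‖x (m+3) - x (m+2)‖^2 := by
      rw [hp1, norm_add_sq_real, real_inner_smul_right, norm_smul, Real.norm_eq_abs,
        abs_of_pos hρpos, mul_pow]
      ring
    have expQ2 : ‖Q (m+3)‖^2 = ‖y (m+3) - ys‖^2
        + 2*(δ/α (m+2))*⟪y (m+3) - ys, y (m+3) - y (m+2)⟫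
        + (δ/α (m+2))^2*‖y (m+3) - y (m+2)‖^2 := by
      rw [hq1, norm_add_sq_real, real_inner_smul_right, norm_smul, Real.norm_eq_abs,
        abs_of_pos hρpos, mul_pow]
      ring
    have expP3 : ⟪P (m+3), x (m+3) - x (m+2)⟫
        = ⟪x (m+3) - xs, x (m+3) - x (m+2)⟫ + (δ/α (m+2))*‖x (m+3) - x (m+2)‖^2 := by
      rw [hp1, inner_add_left, real_inner_smul_left, real_inner_self_eq_norm_sq]
    have expQ3 : ⟪Q (m+3), y (m+3) - y (m+2)⟫
        = ⟪y (m+3) - ys, y (m+3) - y (m+2)⟫ + (δ/α (m+2))*‖y (m+3) - y (m+2)‖^2 := by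
      rw [hq1, inner_add_left, real_inner_smul_left, real_inner_self_eq_norm_sq]
    have expP4 : ⟪P (m+3), x (m+3)⟫
        = ⟪x (m+3) - xs, x (m+3)⟫ + (δ/α (m+2))*⟪x (m+3) - x (m+2), x (m+3)⟫ := by
      rw [hp1, inner_add_left, real_inner_smul_left]
    have expQ4 : ⟪Q (m+3), y (m+3)⟫
        = ⟪y (m+3) - ys, y (m+3)⟫ + (δ/α (m+2))*⟪y (m+3) - y (m+2), y (m+3)⟫ := by
      rw [hq1, inner_add_left, real_inner_smul_left]
    -- subgradient inequalities
    have s1 : ⟪u, x (m+3) - xs⟫ ≥ f (x (m+3)) - f xs + μf/2*‖x (m+3) - xs‖^2 := by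
      have h := hfS (x (m+3)) xs u hu
      have hn : ⟪u, xs - x (m+3)⟫ = -⟪u, x (m+3) - xs⟫ := by
        rw [show xs - x (m+3) = -(x (m+3) - xs) from by abel, inner_neg_right]
      have hnorm : ‖xs - x (m+3)‖ = ‖x (m+3) - xs‖ := norm_sub_rev _ _
      rw [hn, hnorm] at h
      linarith
    have s2 : ⟪u, x (m+3) - x (m+2)⟫ ≥ f (x (m+3)) - f (x (m+2)) + μf/2*‖x (m+3) - x (m+2)‖^2 := by
      have h := hfS (x (m+3)) (x (m+2)) u hu
      have hn : ⟪u, x (m+2) - x (m+3)⟫ = -⟪u, x (m+3) - x (m+2)⟫ := by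
        rw [show x (m+2) - x (m+3) = -(x (m+3) - x (m+2)) from by abel, inner_neg_right]
      have hnorm : ‖x (m+2) - x (m+3)‖ = ‖x (m+3) - x (m+2)‖ := norm_sub_rev _ _
      rw [hn, hnorm] at h
      linarith
    have s3 : ⟪v, y (m+3) - ys⟫ ≥ g (y (m+3)) - g ys + μg/2*‖y (m+3) - ys‖^2 := by
      have h := hgS (y (m+3)) ys v hv
      have hn : ⟪v, ys - y (m+3)⟫ = -⟪v, y (m+3) - ys⟫ := by
        rw [show ys - y (m+3) = -(y (m+3) - ys) from by abel, inner_neg_right]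
      have hnorm : ‖ys - y (m+3)‖ = ‖y (m+3) - ys‖ := norm_sub_rev _ _
      rw [hn, hnorm] at h
      linarith
    have s4 : ⟪v, y (m+3) - y (m+2)⟫ ≥ g (y (m+3)) - g (y (m+2)) + μg/2*‖y (m+3) - y (m+2)‖^2 := by
      have h := hgS (y (m+3)) (y (m+2)) v hv
      have hn : ⟪v, y (m+2) - y (m+3)⟫ = -⟪v, y (m+3) - y (m+2)⟫ := by
        rw [show y (m+2) - y (m+3) = -(y (m+3) - y (m+2)) from by abel, inner_neg_right]
      have hnorm : ‖y (m+2) - y (m+3)‖ = ‖y (m+3) - y (m+2)‖ := norm_sub_rev _ _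
      rw [hn, hnorm] at h
      linarith
    -- the f/μf block (unscaled)
    have hfa : ⟪P (m+3), u⟫ + μf*(δ/α (m+2))*⟪P (m+3), x (m+3) - x (m+2)⟫
        ≥ (f (x (m+3)) - f xs) + (δ/α (m+2))*(f (x (m+3)) - f (x (m+2)))
          + μf/2*‖P (m+3)‖^2 := by
      have s2s := mul_le_mul_of_nonneg_left
        (show f (x (m+3)) - f (x (m+2)) + μf/2*‖x (m+3) - x (m+2)‖^2 ≤ ⟪u, x (m+3) - x (m+2)⟫ from s2)
        hρpos.le
      have lo1 : 0 ≤ μf*((δ/α (m+2))*‖x (m+3) - x (m+2)‖^2) :=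
        mul_nonneg hμf (mul_nonneg hρpos.le (sq_nonneg _))
      have lo2 : 0 ≤ μf*((δ/α (m+2))^2*‖x (m+3) - x (m+2)‖^2) :=
        mul_nonneg hμf (mul_nonneg (sq_nonneg _) (sq_nonneg _))
      have expP2f : μf/2*‖P (m+3)‖^2 = μf/2*(‖x (m+3) - xs‖^2
          + 2*(δ/α (m+2))*⟪x (m+3) - xs, x (m+3) - x (m+2)⟫
          + (δ/α (m+2))^2*‖x (m+3) - x (m+2)‖^2) := by rw [expP2]
      have expP3f : μf*(δ/α (m+2))*⟪P (m+3), x (m+3) - x (m+2)⟫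
          = μf*(δ/α (m+2))*(⟪x (m+3) - xs, x (m+3) - x (m+2)⟫
            + (δ/α (m+2))*‖x (m+3) - x (m+2)‖^2) := by rw [expP3]
      linarith only [expP1, expP2f, expP3f, s1, s2s, lo1, lo2]
    have hga : ⟪Q (m+3), v⟫ + μg*(δ/α (m+2))*⟪Q (m+3), y (m+3) - y (m+2)⟫
        ≥ (g (y (m+3)) - g ys) + (δ/α (m+2))*(g (y (m+3)) - g (y (m+2)))
          + μg/2*‖Q (m+3)‖^2 := by
      have s4s := mul_le_mul_of_nonneg_left
        (show g (y (m+3)) - g (y (m+2)) + μg/2*‖y (m+3) - y (m+2)‖^2 ≤ ⟪v, y (m+3) - y (m+2)⟫ from s4)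
        hρpos.le
      have lo1 : 0 ≤ μg*((δ/α (m+2))*‖y (m+3) - y (m+2)‖^2) :=
        mul_nonneg hμg (mul_nonneg hρpos.le (sq_nonneg _))
      have lo2 : 0 ≤ μg*((δ/α (m+2))^2*‖y (m+3) - y (m+2)‖^2) :=
        mul_nonneg hμg (mul_nonneg (sq_nonneg _) (sq_nonneg _))
      have expQ2f : μg/2*‖Q (m+3)‖^2 = μg/2*(‖y (m+3) - ys‖^2
          + 2*(δ/α (m+2))*⟪y (m+3) - ys, y (m+3) - y (m+2)⟫
          + (δ/α (m+2))^2*‖y (m+3) - y (m+2)‖^2) := by rw [expQ2]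
      have expQ3f : μg*(δ/α (m+2))*⟪Q (m+3), y (m+3) - y (m+2)⟫
          = μg*(δ/α (m+2))*(⟪y (m+3) - ys, y (m+3) - y (m+2)⟫
            + (δ/α (m+2))*‖y (m+3) - y (m+2)‖^2) := by rw [expQ3]
      linarith only [expQ1, expQ2f, expQ3f, s3, s4s, lo1, lo2]
    -- the ε blocks (unscaled)
    have hea : ⟪P (m+3), x (m+3)⟫ ≥ ‖x (m+3)‖^2/2 - ‖xs‖^2/2
        + (δ/α (m+2))*(‖x (m+3)‖^2/2 - ‖x (m+2)‖^2/2) := by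
      have i1 : ⟪x (m+3) - xs, x (m+3)⟫ = ‖x (m+3)‖^2 - ⟪xs, x (m+3)⟫ := by
        rw [inner_sub_left, real_inner_self_eq_norm_sq]
      have i2 : ⟪x (m+3) - x (m+2), x (m+3)⟫ = ‖x (m+3)‖^2 - ⟪x (m+2), x (m+3)⟫ := by
        rw [inner_sub_left, real_inner_self_eq_norm_sq]
      have i3 := inner_le_half_aux xs (x (m+3))
      have i4 := inner_le_half_aux (x (m+2)) (x (m+3))
      have i6 := mul_le_mul_of_nonneg_left
        (show ‖x (m+3)‖^2/2 - ‖x (m+2)‖^2/2 ≤ ⟪x (m+3) - x (m+2), x (m+3)⟫ from by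
          rw [i2]; linarith) hρpos.le
      rw [expP4]
      linarith only [i1, i3, i6]
    have heb : ⟪Q (m+3), y (m+3)⟫ ≥ ‖y (m+3)‖^2/2 - ‖ys‖^2/2
        + (δ/α (m+2))*(‖y (m+3)‖^2/2 - ‖y (m+2)‖^2/2) := by
      have i1 : ⟪y (m+3) - ys, y (m+3)⟫ = ‖y (m+3)‖^2 - ⟪ys, y (m+3)⟫ := by
        rw [inner_sub_left, real_inner_self_eq_norm_sq]
      have i2 : ⟪y (m+3) - y (m+2), y (m+3)⟫ = ‖y (m+3)‖^2 - ⟪y (m+2), y (m+3)⟫ := by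
        rw [inner_sub_left, real_inner_self_eq_norm_sq]
      have i3 := inner_le_half_aux ys (y (m+3))
      have i4 := inner_le_half_aux (y (m+2)) (y (m+3))
      have i6 := mul_le_mul_of_nonneg_left
        (show ‖y (m+3)‖^2/2 - ‖y (m+2)‖^2/2 ≤ ⟪y (m+3) - y (m+2), y (m+3)⟫ from by
          rw [i2]; linarith) hρpos.le
      rw [expQ4]
      linarith only [i1, i3, i6]
    -- the (1-δγ) blocks
    have hca : (1-δ*γ)*⟪P (m+3), x (m+3) - x (m+2)⟫
        ≤ -((δ*γ-1)/2*(‖x (m+3) - xs‖^2 - ‖x (m+2) - xs‖^2)) := by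
      have j0 := inner_self_sub_aux (x (m+3) - xs) (x (m+2) - xs)
      have je : (x (m+3) - xs) - (x (m+2) - xs) = x (m+3) - x (m+2) := by abel
      rw [je] at j0
      have j2 : (‖x (m+3) - xs‖^2 - ‖x (m+2) - xs‖^2)/2 ≤ ⟪P (m+3), x (m+3) - x (m+2)⟫ := by
        rw [expP3, j0]
        have h9 : 0 ≤ (δ/α (m+2))*‖x (m+3) - x (m+2)‖^2 := mul_nonneg hρpos.le (sq_nonneg _)
        linarith only [h9, sq_nonneg ‖x (m+3) - x (m+2)‖]
      linarith only [mul_le_mul_of_nonneg_left j2 (show (0:ℝ) ≤ δ*γ-1 from by linarith only [hδγ])]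
    have hcb : (1-δ*γ)*⟪Q (m+3), y (m+3) - y (m+2)⟫
        ≤ -((δ*γ-1)/2*(‖y (m+3) - ys‖^2 - ‖y (m+2) - ys‖^2)) := by
      have j0 := inner_self_sub_aux (y (m+3) - ys) (y (m+2) - ys)
      have je : (y (m+3) - ys) - (y (m+2) - ys) = y (m+3) - y (m+2) := by abel
      rw [je] at j0
      have j2 : (‖y (m+3) - ys‖^2 - ‖y (m+2) - ys‖^2)/2 ≤ ⟪Q (m+3), y (m+3) - y (m+2)⟫ := by
        rw [expQ3, j0]
        have h9 : 0 ≤ (δ/α (m+2))*‖y (m+3) - y (m+2)‖^2 := mul_nonneg hρpos.le (sq_nonneg _)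
        linarith only [h9, sq_nonneg ‖y (m+3) - y (m+2)‖]
      linarith only [mul_le_mul_of_nonneg_left j2 (show (0:ℝ) ≤ δ*γ-1 from by linarith only [hδγ])]
    -- the residual r and the λ update
    have hrdef : A (Zd (m+3)) + B (Hd (m+3)) - b = A (P (m+3)) + B (Q (m+3)) := by
      have h1 : A (Zd (m+3)) + B (Hd (m+3)) - b
          = A (P (m+3)) + B (Q (m+3)) + (A xs + B ys - b) := by
        rw [hP, hQ, map_sub, map_sub]; abel
      rw [h1, hAb, add_zero]
    have hlamP : lam (m+3) = lam (m+2) + θ (m+2) • (A (P (m+3)) + B (Q (m+3))) := by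
      rw [hlam3, hrdef, hθ0]
    have hldiff : lam (m+3) - ls = (lam (m+2) - ls) + θ (m+2) • (A (P (m+3)) + B (Q (m+3))) := by
      rw [hlamP]; abel
    have eqlam1 : ‖lam (m+3) - ls‖^2 = ‖lam (m+2) - ls‖^2
        + 2*θ (m+2)*⟪lam (m+2) - ls, A (P (m+3)) + B (Q (m+3))⟫
        + θ (m+2)^2*‖A (P (m+3)) + B (Q (m+3))‖^2 := by
      rw [hldiff, norm_add_sq_real, real_inner_smul_right, norm_smul, Real.norm_eq_abs,
        abs_of_pos hθpos, mul_pow]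
      ring
    have eqlam2 : ⟪lam (m+3) - ls, A (P (m+3)) + B (Q (m+3))⟫
        = ⟪lam (m+2) - ls, A (P (m+3)) + B (Q (m+3))⟫
          + θ (m+2)*‖A (P (m+3)) + B (Q (m+3))‖^2 := by
      rw [hldiff, inner_add_left, real_inner_smul_left, real_inner_self_eq_norm_sq]
    -- λ̄ in terms of lam (m+3)
    have hQd : B (Q (m+3)) - B (Q (m+2)) = B (Hd (m+3)) - B (Hd (m+2)) := by
      rw [hQ, hQ, map_sub, map_sub]; abel
    have hlbeq : lb = lam (m+3) - θ (m+2) • (B (Q (m+3)) - B (Q (m+2))) := by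
      rw [hQd, hθ0, hlb, hlam3]; module
    -- cross-block
    have hcross : -(δ*θ (m+2))*⟪A (P (m+3)), lb⟫ - (δ*θ (m+2))*⟪B (Q (m+3)), lam (m+3)⟫
        + (δ*θ (m+2))*⟪lam (m+3) - ls, A (P (m+3)) + B (Q (m+3))⟫
        - (δ*(θ (m+2))^2/2)*‖A (P (m+3)) + B (Q (m+3))‖^2
        ≤ -(δ*θ (m+2))*⟪ls, A (P (m+3)) + B (Q (m+3))⟫
          - (δ*(θ (m+2))^2/2)*(‖B (Q (m+3))‖^2 - ‖B (Q (m+2))‖^2) := by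
      have c1 : ⟪A (P (m+3)), lb⟫ = ⟪A (P (m+3)), lam (m+3)⟫
          - θ (m+2)*⟪A (P (m+3)), B (Q (m+3)) - B (Q (m+2))⟫ := by
        rw [hlbeq, inner_sub_right, real_inner_smul_right]
      have c2 : ⟪A (P (m+3)), lam (m+3)⟫ + ⟪B (Q (m+3)), lam (m+3)⟫
          = ⟪A (P (m+3)) + B (Q (m+3)), lam (m+3)⟫ := (inner_add_left _ _ _).symm
      have c3 : ⟪lam (m+3) - ls, A (P (m+3)) + B (Q (m+3))⟫
          = ⟪lam (m+3), A (P (m+3)) + B (Q (m+3))⟫ - ⟪ls, A (P (m+3)) + B (Q (m+3))⟫ :=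
        inner_sub_left _ _ _
      have c4 : ⟪A (P (m+3)) + B (Q (m+3)), lam (m+3)⟫
          = ⟪lam (m+3), A (P (m+3)) + B (Q (m+3))⟫ := real_inner_comm _ _
      have c5 : ⟪A (P (m+3)), B (Q (m+3)) - B (Q (m+2))⟫
          - (1/2)*‖A (P (m+3)) + B (Q (m+3))‖^2
          ≤ -(1/2)*(‖B (Q (m+3))‖^2 - ‖B (Q (m+2))‖^2) := by
        have d1 : ⟪A (P (m+3)), B (Q (m+3)) - B (Q (m+2))⟫
            = ⟪A (P (m+3)) + B (Q (m+3)), B (Q (m+3)) - B (Q (m+2))⟫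
              - ⟪B (Q (m+3)), B (Q (m+3)) - B (Q (m+2))⟫ := by
          rw [← inner_sub_left]
          congr 1
          abel
        have d2 := inner_self_sub_aux (B (Q (m+3))) (B (Q (m+2)))
        have d3 := inner_le_half_aux (A (P (m+3)) + B (Q (m+3))) (B (Q (m+3)) - B (Q (m+2)))
        rw [d1, d2]
        linarith
      have c5s := mul_le_mul_of_nonneg_left c5
        (show (0:ℝ) ≤ δ*(θ (m+2))^2 from by positivity)
      have c2s : δ*θ (m+2)*(⟪A (P (m+3)), lam (m+3)⟫ + ⟪B (Q (m+3)), lam (m+3)⟫)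
          = δ*θ (m+2)*⟪A (P (m+3)) + B (Q (m+3)), lam (m+3)⟫ := by rw [c2]
      have c4s : δ*θ (m+2)*⟪A (P (m+3)) + B (Q (m+3)), lam (m+3)⟫
          = δ*θ (m+2)*⟪lam (m+3), A (P (m+3)) + B (Q (m+3))⟫ := by rw [c4]
      rw [c1, c3]
      linarith only [c5s, c2s, c4s]
    -- BQ-energy block
    have hBQnorm : ‖B (Q (m+3))‖^2 ≤ ‖B‖^2*‖Q (m+3)‖^2 := by
      nlinarith only [B.le_opNorm (Q (m+3)), norm_nonneg (B (Q (m+3))), norm_nonneg (Q (m+3)),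
        B.opNorm_nonneg]
    have hB2' : ‖B‖^2*((θ (m+3))^2 - (θ (m+2))^2) ≤ θ (m+2)*μg := by
      have h := hB2 (m+2) (by omega)
      rw [e3] at h
      rw [hθ, hθ]
      linarith only [h]
    have hbq : δ/2*(θ (m+3))^2*‖B (Q (m+3))‖^2 - δ/2*(θ (m+2))^2*‖B (Q (m+2))‖^2
        ≤ δ*(θ (m+2))^2/2*(‖B (Q (m+3))‖^2 - ‖B (Q (m+2))‖^2)
          + δ*θ (m+2)*(μg/2)*‖Q (m+3)‖^2 := by
      rcases le_or_gt ((θ (m+3))^2) ((θ (m+2))^2) with hc | hc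
      · have h1 : 0 ≤ δ*θ (m+2)*(μg/2)*‖Q (m+3)‖^2 :=
          mul_nonneg (mul_nonneg (mul_nonneg hδ.le hθpos.le) (by linarith)) (sq_nonneg _)
        have h2 : ((θ (m+3))^2 - (θ (m+2))^2)*‖B (Q (m+3))‖^2 ≤ 0 :=
          mul_nonpos_of_nonpos_of_nonneg (by linarith) (sq_nonneg _)
        linarith only [h1, mul_le_mul_of_nonneg_left h2 (show (0:ℝ) ≤ δ/2 from by linarith only [hδ])]
      · have h3 : ((θ (m+3))^2 - (θ (m+2))^2)*‖B (Q (m+3))‖^2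
            ≤ θ (m+2)*μg*‖Q (m+3)‖^2 := by
          have h4 := mul_le_mul_of_nonneg_left hBQnorm (show (0:ℝ) ≤ (θ (m+3))^2 - (θ (m+2))^2 from by linarith)
          have h5 := mul_le_mul_of_nonneg_right hB2' (sq_nonneg ‖Q (m+3)‖)
          linarith only [h4, h5]
        linarith only [mul_le_mul_of_nonneg_left h3 (show (0:ℝ) ≤ δ/2 from by linarith only [hδ])]
    -- V bookkeeping
    have hVs3 := hV (m+3)
    have hVs2 := hV (m+2)
    have hrs : A (P (m+3)) + B (Q (m+3))
        = s (m+3) + (δ/α (m+2)) • (s (m+3) - s (m+2)) := by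
      have h1 : A (P (m+3)) + B (Q (m+3))
          = s (m+3) + (δ/α (m+2)) • (s (m+3) - s (m+2)) + (-(1:ℝ)) • (A xs + B ys - b) := by
        rw [hp1, hq1, hs, hs]
        simp only [map_add, map_smul, map_sub]
        module
      rw [h1, hAb, smul_zero, add_zero]
    have eqr : ⟪ls, A (P (m+3)) + B (Q (m+3))⟫
        = ⟪ls, s (m+3)⟫ + (δ/α (m+2))*(⟪ls, s (m+3)⟫ - ⟪ls, s (m+2)⟫) := by
      rw [hrs, inner_add_right, real_inner_smul_right, inner_sub_right]
    -- conversion equalities δ·θ·(δ/α) = δ²·β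
    have eqc1 : δ*θ (m+2)*((δ/α (m+2))*(f (x (m+3)) - f (x (m+2))))
        = δ^2*β (m+2)*(f (x (m+3)) - f (x (m+2))) := by
      rw [hθ0]; field_simp
    have eqc2 : δ*θ (m+2)*((δ/α (m+2))*(g (y (m+3)) - g (y (m+2))))
        = δ^2*β (m+2)*(g (y (m+3)) - g (y (m+2))) := by
      rw [hθ0]; field_simp
    have eqc3 : δ*θ (m+2)*ε (m+2)*((δ/α (m+2))*(‖x (m+3)‖^2/2 - ‖x (m+2)‖^2/2))
        = δ^2*β (m+2)*ε (m+2)*(‖x (m+3)‖^2/2 - ‖x (m+2)‖^2/2) := by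
      rw [hθ0]; field_simp
    have eqc4 : δ*θ (m+2)*ε (m+2)*((δ/α (m+2))*(‖y (m+3)‖^2/2 - ‖y (m+2)‖^2/2))
        = δ^2*β (m+2)*ε (m+2)*(‖y (m+3)‖^2/2 - ‖y (m+2)‖^2/2) := by
      rw [hθ0]; field_simp
    have eqc5 : δ*θ (m+2)*((δ/α (m+2))*(⟪ls, s (m+3)⟫ - ⟪ls, s (m+2)⟫))
        = δ^2*β (m+2)*(⟪ls, s (m+3)⟫ - ⟪ls, s (m+2)⟫) := by
      rw [hθ0]; field_simp
    -- scaled block inequalities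
    have hδθ : (0:ℝ) ≤ δ*θ (m+2) := by positivity
    have hδθε : (0:ℝ) ≤ δ*θ (m+2)*ε (m+2) := by positivity
    have hfas := mul_le_mul_of_nonneg_left
      (show (f (x (m+3)) - f xs) + (δ/α (m+2))*(f (x (m+3)) - f (x (m+2))) + μf/2*‖P (m+3)‖^2
        ≤ ⟪P (m+3), u⟫ + μf*(δ/α (m+2))*⟪P (m+3), x (m+3) - x (m+2)⟫ from hfa) hδθ
    have hgas := mul_le_mul_of_nonneg_left
      (show (g (y (m+3)) - g ys) + (δ/α (m+2))*(g (y (m+3)) - g (y (m+2))) + μg/2*‖Q (m+3)‖^2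
        ≤ ⟪Q (m+3), v⟫ + μg*(δ/α (m+2))*⟪Q (m+3), y (m+3) - y (m+2)⟫ from hga) hδθ
    have heas := mul_le_mul_of_nonneg_left
      (show ‖x (m+3)‖^2/2 - ‖xs‖^2/2 + (δ/α (m+2))*(‖x (m+3)‖^2/2 - ‖x (m+2)‖^2/2)
        ≤ ⟪P (m+3), x (m+3)⟫ from hea) hδθε
    have hebs := mul_le_mul_of_nonneg_left
      (show ‖y (m+3)‖^2/2 - ‖ys‖^2/2 + (δ/α (m+2))*(‖y (m+3)‖^2/2 - ‖y (m+2)‖^2/2)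
        ≤ ⟪Q (m+3), y (m+3)⟫ from heb) hδθε
    -- V coefficient bookkeeping (uses hββ and V ≥ 0)
    have hββ' : δ * β (m+3) ≤ δ * β (m+2) + θ (m+2) := by
      have h := hββ (m+2) (by omega)
      rw [e3] at h
      rw [hθ0]; linarith
    have hL1 : δ^2*β (m+3)*V (m+3) ≤ δ^2*β (m+2)*V (m+3) + δ*θ (m+2)*V (m+3) := by
      linarith only [mul_le_mul_of_nonneg_right hββ' (mul_nonneg hδ.le (hVnn (m+3)))]
    have hL2 : δ^2/2*(β (m+3)*ε (m+3))*(‖x (m+3)‖^2 + ‖y (m+3)‖^2)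
        ≤ δ^2/2*(β (m+2)*ε (m+2))*(‖x (m+3)‖^2 + ‖y (m+3)‖^2)
          + δ/2*(θ (m+2)*ε (m+2))*(‖x (m+3)‖^2 + ‖y (m+3)‖^2) := by
      have hεm : ε (m+3) ≤ ε (m+2) := by
        have := hεmono (m+2) (by omega); rw [e3] at this; exact this
      have hS : (0:ℝ) ≤ ‖x (m+3)‖^2 + ‖y (m+3)‖^2 := by positivity
      have h1 : δ*β (m+3)*ε (m+3) ≤ (δ*β (m+2) + θ (m+2))*ε (m+2) := by
        have h2 : δ*β (m+3)*ε (m+3) ≤ δ*β (m+3)*ε (m+2) :=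
          mul_le_mul_of_nonneg_left hεm (by positivity)
        have h3 : δ*β (m+3)*ε (m+2) ≤ (δ*β (m+2) + θ (m+2))*ε (m+2) :=
          mul_le_mul_of_nonneg_right hββ' hεk
        linarith
      linarith only [mul_le_mul_of_nonneg_right h1 (mul_nonneg (by linarith only [hδ] : (0:ℝ) ≤ δ/2) hS)]
    -- drop the μf term
    have hdrop : 0 ≤ δ*θ (m+2)*(μf/2*‖P (m+3)‖^2) :=
      mul_nonneg hδθ (mul_nonneg (by linarith) (sq_nonneg _))
    -- staged assembly
    have hPfin : 1/2*‖P (m+3)‖^2 - 1/2*‖P (m+2)‖^2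
        + (δ*γ-1)/2*(‖x (m+3) - xs‖^2 - ‖x (m+2) - xs‖^2)
        ≤ -(δ*θ (m+2))*(f (x (m+3)) - f xs) - δ^2*β (m+2)*(f (x (m+3)) - f (x (m+2)))
          - (δ*θ (m+2))*⟪A (P (m+3)), lb⟫
          - (δ*θ (m+2)*ε (m+2))*(‖x (m+3)‖^2/2 - ‖xs‖^2/2)
          - δ^2*β (m+2)*ε (m+2)*(‖x (m+3)‖^2/2 - ‖x (m+2)‖^2/2) := by
      linarith only [hsqP, hdPinner, hfas, heas, hca, eqc1, eqc3, hdrop]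
    have hQfin : 1/2*‖Q (m+3)‖^2 - 1/2*‖Q (m+2)‖^2
        + (δ*γ-1)/2*(‖y (m+3) - ys‖^2 - ‖y (m+2) - ys‖^2)
        + δ*θ (m+2)*(μg/2)*‖Q (m+3)‖^2
        ≤ -(δ*θ (m+2))*(g (y (m+3)) - g ys) - δ^2*β (m+2)*(g (y (m+3)) - g (y (m+2)))
          - (δ*θ (m+2))*⟪B (Q (m+3)), lam (m+3)⟫
          - (δ*θ (m+2)*ε (m+2))*(‖y (m+3)‖^2/2 - ‖ys‖^2/2)
          - δ^2*β (m+2)*ε (m+2)*(‖y (m+3)‖^2/2 - ‖y (m+2)‖^2/2) := by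
      linarith only [hsqQ, hdQinner, hgas, hebs, hcb, eqc2, eqc4]
    have eqlam1s : δ/2*‖lam (m+3) - ls‖^2 = δ/2*(‖lam (m+2) - ls‖^2
        + 2*θ (m+2)*⟪lam (m+2) - ls, A (P (m+3)) + B (Q (m+3))⟫
        + θ (m+2)^2*‖A (P (m+3)) + B (Q (m+3))‖^2) := by rw [eqlam1]
    have eqlam2s : (δ*θ (m+2))*⟪lam (m+3) - ls, A (P (m+3)) + B (Q (m+3))⟫
        = (δ*θ (m+2))*(⟪lam (m+2) - ls, A (P (m+3)) + B (Q (m+3))⟫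
          + θ (m+2)*‖A (P (m+3)) + B (Q (m+3))‖^2) := by rw [eqlam2]
    have hLfin : δ/2*‖lam (m+3) - ls‖^2 - δ/2*‖lam (m+2) - ls‖^2
        + δ/2*(θ (m+3))^2*‖B (Q (m+3))‖^2 - δ/2*(θ (m+2))^2*‖B (Q (m+2))‖^2
        ≤ (δ*θ (m+2))*⟪A (P (m+3)), lb⟫ + (δ*θ (m+2))*⟪B (Q (m+3)), lam (m+3)⟫
          - (δ*θ (m+2))*⟪ls, A (P (m+3)) + B (Q (m+3))⟫
          + δ*θ (m+2)*(μg/2)*‖Q (m+3)‖^2 := by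
      linarith only [eqlam1s, eqlam2s, hcross, hbq]
    have hVfin : δ^2*β (m+3)*V (m+3) + δ^2/2*(β (m+3)*ε (m+3))*(‖x (m+3)‖^2 + ‖y (m+3)‖^2)
        ≤ δ^2*β (m+2)*V (m+3) + δ*θ (m+2)*V (m+3)
          + δ^2/2*(β (m+2)*ε (m+2))*(‖x (m+3)‖^2 + ‖y (m+3)‖^2)
          + δ/2*(θ (m+2)*ε (m+2))*(‖x (m+3)‖^2 + ‖y (m+3)‖^2) := by
      linarith only [hL1, hL2]
    have hVs3a : δ*θ (m+2)*V (m+3)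
        = δ*θ (m+2)*(f (x (m+3)) + g (y (m+3)) - f xs - g ys + ⟪ls, s (m+3)⟫) := by rw [hVs3]
    have hVs3b : δ^2*β (m+2)*V (m+3)
        = δ^2*β (m+2)*(f (x (m+3)) + g (y (m+3)) - f xs - g ys + ⟪ls, s (m+3)⟫) := by rw [hVs3]
    have hVs2b : δ^2*β (m+2)*V (m+2)
        = δ^2*β (m+2)*(f (x (m+2)) + g (y (m+2)) - f xs - g ys + ⟪ls, s (m+2)⟫) := by rw [hVs2]
    have eqrs : (δ*θ (m+2))*⟪ls, A (P (m+3)) + B (Q (m+3))⟫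
        = (δ*θ (m+2))*(⟪ls, s (m+3)⟫ + (δ/α (m+2))*(⟪ls, s (m+3)⟫ - ⟪ls, s (m+2)⟫)) := by
      rw [eqr]
    rw [hE, hE]
    linarith only [hVfin, hPfin, hQfin, hLfin, hVs3a, hVs3b, hVs2b, eqrs, eqc5]
  -- bound on tail sums of θ k * ε k
  obtain ⟨T, hTnn, hT⟩ : ∃ T : ℝ, 0 ≤ T ∧ ∀ k, 2 ≤ k →
      (Finset.Ico 2 k).sum (fun j => θ j * ε j) ≤ T := by
    have hsum2 : Summable (fun n => α (2+n) * β (2+n) * ε (2+n)) := by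
      have h := (summable_nat_add_iff 2).mpr hsum
      simpa [Nat.add_comm] using h
    have hnn : ∀ n : ℕ, 0 ≤ α (2+n) * β (2+n) * ε (2+n) := by
      intro n
      have h1 := hα (2+n) (by omega)
      have h2 := hβpos (2+n) (by omega)
      have h3 := hεnn (2+n) (by omega)
      positivity
    refine ⟨∑' n, α (2+n) * β (2+n) * ε (2+n), tsum_nonneg hnn, ?_⟩
    intro k hk
    have heq : (Finset.Ico 2 k).sum (fun j => θ j * ε j)
        = (Finset.range (k-2)).sum (fun i => α (2+i) * β (2+i) * ε (2+i)) := by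
      rw [Finset.sum_Ico_eq_sum_range]
      exact Finset.sum_congr rfl (fun i _ => by rw [hθ])
    rw [heq]
    exact Summable.sum_le_tsum _ (fun i _ => hnn i) hsum2
  obtain ⟨C₀, hC₀⟩ : ∃ C₀ : ℝ, C₀ = E 2 + δ/2 * T * (‖xs‖^2 + ‖ys‖^2) := ⟨_, rfl⟩
  have hcstar : (0:ℝ) ≤ ‖xs‖^2 + ‖ys‖^2 := by positivity
  have hEbound : ∀ k, 2 ≤ k → E k ≤ C₀ := by
    have key : ∀ k, 2 ≤ k → E k ≤ E 2
        + δ/2 * ((Finset.Ico 2 k).sum (fun j => θ j * ε j)) * (‖xs‖^2 + ‖ys‖^2) := by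
      intro k hk
      induction k, hk using Nat.le_induction with
      | base => simp
      | succ k hk ih =>
        have h1 := hEstep k hk
        have h2 : (Finset.Ico 2 (k+1)).sum (fun j => θ j * ε j)
            = (Finset.Ico 2 k).sum (fun j => θ j * ε j) + θ k * ε k :=
          Finset.sum_Ico_succ_top hk _
        rw [h2]
        have h3 : δ/2 * (((Finset.Ico 2 k).sum fun j => θ j * ε j) + θ k * ε k) * (‖xs‖^2 + ‖ys‖^2)
            = δ/2 * ((Finset.Ico 2 k).sum fun j => θ j * ε j) * (‖xs‖^2 + ‖ys‖^2)
              + δ/2 * (θ k * ε k) * (‖xs‖^2 + ‖ys‖^2) := by ring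
        linarith
    intro k hk
    have h1 := key k hk
    have h2 := hT k hk
    have h3 : δ/2 * ((Finset.Ico 2 k).sum fun j => θ j * ε j) * (‖xs‖^2+‖ys‖^2)
        ≤ δ/2 * T * (‖xs‖^2+‖ys‖^2) := by
      apply mul_le_mul_of_nonneg_right _ hcstar
      exact mul_le_mul_of_nonneg_left h2 (by positivity)
    rw [hC₀]; linarith
  -- nonnegativity of each energy term, and individual bounds
  have hEnn : ∀ k, 1 ≤ k → 0 ≤ E k ∧ δ^2 * β k * V k ≤ E k ∧ 1/2*‖P k‖^2 ≤ E k ∧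
      1/2*‖Q k‖^2 ≤ E k ∧ δ/2*‖lam k - ls‖^2 ≤ E k := by
    intro k hk
    have hb := hβpos k hk
    have he := hεnn k hk
    have hv := hVnn k
    have t1 : 0 ≤ δ^2 * β k * V k := by positivity
    have t2 : 0 ≤ δ^2/2 * (β k * ε k) * (‖x k‖^2 + ‖y k‖^2) := by positivity
    have t3 : (0:ℝ) ≤ 1/2 * ‖P k‖^2 := by positivity
    have t4 : (0:ℝ) ≤ 1/2 * ‖Q k‖^2 := by positivity
    have t5 : (0:ℝ) ≤ δ/2 * ‖lam k - ls‖^2 := by positivity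
    have t6 : (0:ℝ) ≤ (δ*γ-1)/2 * (‖x k - xs‖^2 + ‖y k - ys‖^2) := by
      have h7 : (0:ℝ) ≤ ‖x k - xs‖^2 + ‖y k - ys‖^2 := by positivity
      nlinarith
    have t7 : (0:ℝ) ≤ δ/2 * (θ k)^2 * ‖B (Q k)‖^2 := by positivity
    rw [hE k]
    exact ⟨by linarith, by linarith, by linarith, by linarith, by linarith⟩
  have hEterms : ∀ k, 2 ≤ k → δ^2 * β k * V k ≤ C₀ ∧ ‖P k‖^2 ≤ 2*C₀ ∧ ‖Q k‖^2 ≤ 2*C₀ ∧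
      ‖lam k - ls‖^2 ≤ 2*C₀/δ := by
    intro k hk
    have h1 := hEbound k hk
    have h2 := hEnn k (by omega)
    refine ⟨by linarith [h2.2.1], by linarith [h2.2.2.1], by linarith [h2.2.2.2.1], ?_⟩
    have h3 : δ/2 * ‖lam k - ls‖^2 ≤ C₀ := by linarith [h2.2.2.2.2]
    rw [le_div_iff₀ hδ]
    linarith
  have hC₀nn : 0 ≤ C₀ := by
    have h1 := (hEnn 2 (by omega)).1
    have h2 : 0 ≤ δ/2 * T * (‖xs‖^2 + ‖ys‖^2) :=
      mul_nonneg (mul_nonneg (by positivity) hTnn) hcstar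
    rw [hC₀]; linarith
  -- lambda bound (avoiding sqrt):  t ≤ 1 + t^2
  have habs : ∀ t : ℝ, t ≤ 1 + t^2 := fun t => by nlinarith [sq_nonneg (t-1)]
  obtain ⟨cl, hcl⟩ : ∃ cl : ℝ, cl = 1 + 2*C₀/δ := ⟨_, rfl⟩
  have hlamb : ∀ k, 2 ≤ k → ‖lam k - ls‖ ≤ cl := by
    intro k hk
    have h1 := (hEterms k hk).2.2.2
    have h2 := habs ‖lam k - ls‖
    rw [hcl]; linarith
  obtain ⟨cP, hcP⟩ : ∃ cP : ℝ, cP = 1 + 2*C₀ := ⟨_, rfl⟩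
  have hPb : ∀ k, 2 ≤ k → ‖P k‖ ≤ cP := by
    intro k hk; have h1 := (hEterms k hk).2.1; have h2 := habs ‖P k‖; rw [hcP]; linarith
  have hQb : ∀ k, 2 ≤ k → ‖Q k‖ ≤ cP := by
    intro k hk; have h1 := (hEterms k hk).2.2.1; have h2 := habs ‖Q k‖; rw [hcP]; linarith
  -- boundedness of x, y by induction
  have hxb : ∀ k, 2 ≤ k → ‖x k - xs‖ ≤ max ‖x 2 - xs‖ cP := by
    intro k hk
    induction k, hk using Nat.le_induction with
    | base => exact le_max_left _ _
    | succ k hk ih =>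
      have hk1 : 1 ≤ k := by omega
      have hρ : 0 < δ / α k := div_pos hδ (hα k hk1)
      have hid : (1 + δ / α k) • (x (k+1) - xs) = (δ / α k) • (x k - xs) + P (k+1) := by
        rw [hPstruct k hk1]
        match_scalars <;> ring
      have h1 : (1 + δ / α k) * ‖x (k+1) - xs‖ ≤ (δ / α k) * ‖x k - xs‖ + ‖P (k+1)‖ := by
        calc (1 + δ / α k) * ‖x (k+1) - xs‖ = ‖(1 + δ / α k) • (x (k+1) - xs)‖ := by
              rw [norm_smul, Real.norm_eq_abs, abs_of_pos (by linarith)]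
          _ = ‖(δ / α k) • (x k - xs) + P (k+1)‖ := by rw [hid]
          _ ≤ ‖(δ / α k) • (x k - xs)‖ + ‖P (k+1)‖ := norm_add_le _ _
          _ = (δ / α k) * ‖x k - xs‖ + ‖P (k+1)‖ := by
              rw [norm_smul, Real.norm_eq_abs, abs_of_pos hρ]
      have h3 : ‖P (k+1)‖ ≤ max ‖x 2 - xs‖ cP := le_trans (hPb (k+1) (by omega)) (le_max_right _ _)
      have h5 := mul_le_mul_of_nonneg_left ih (le_of_lt hρ)
      have h4 : (1 + δ / α k) * ‖x (k+1) - xs‖ ≤ (1 + δ / α k) * max ‖x 2 - xs‖ cP := by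
        nlinarith
      exact le_of_mul_le_mul_left h4 (by linarith)
  have hyb : ∀ k, 2 ≤ k → ‖y k - ys‖ ≤ max ‖y 2 - ys‖ cP := by
    intro k hk
    induction k, hk using Nat.le_induction with
    | base => exact le_max_left _ _
    | succ k hk ih =>
      have hk1 : 1 ≤ k := by omega
      have hρ : 0 < δ / α k := div_pos hδ (hα k hk1)
      have hid : (1 + δ / α k) • (y (k+1) - ys) = (δ / α k) • (y k - ys) + Q (k+1) := by
        rw [hQstruct k hk1]
        match_scalars <;> ring
      have h1 : (1 + δ / α k) * ‖y (k+1) - ys‖ ≤ (δ / α k) * ‖y k - ys‖ + ‖Q (k+1)‖ := by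
        calc (1 + δ / α k) * ‖y (k+1) - ys‖ = ‖(1 + δ / α k) • (y (k+1) - ys)‖ := by
              rw [norm_smul, Real.norm_eq_abs, abs_of_pos (by linarith)]
          _ = ‖(δ / α k) • (y k - ys) + Q (k+1)‖ := by rw [hid]
          _ ≤ ‖(δ / α k) • (y k - ys)‖ + ‖Q (k+1)‖ := norm_add_le _ _
          _ = (δ / α k) * ‖y k - ys‖ + ‖Q (k+1)‖ := by
              rw [norm_smul, Real.norm_eq_abs, abs_of_pos hρ]
      have h3 : ‖Q (k+1)‖ ≤ max ‖y 2 - ys‖ cP := le_trans (hQb (k+1) (by omega)) (le_max_right _ _)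
      have h5 := mul_le_mul_of_nonneg_left ih (le_of_lt hρ)
      have h4 : (1 + δ / α k) * ‖y (k+1) - ys‖ ≤ (1 + δ / α k) * max ‖y 2 - ys‖ cP := by
        nlinarith
      exact le_of_mul_le_mul_left h4 (by linarith)
  -- feasibility: the λ-tracking argument
  have hlamrec : ∀ k, 1 ≤ k → lam (k+1) - lam k = (θ k + δ * β k) • s (k+1) - (δ * β k) • s k := by
    intro k hk
    have hα' := (hα k hk).ne'
    have h := hlam k hk
    rw [hZd k hk, hZ k hk, hHd k hk, hH k hk] at h
    rw [h, hs, hs, hθ]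
    simp only [map_add, map_smul, map_sub, smul_add, smul_sub, smul_smul]
    match_scalars <;> field_simp <;> ring
  obtain ⟨G, hG⟩ : ∃ G : ℕ → Z, ∀ k, G k = (δ * β k) • s k - (lam k - ls) := ⟨_, fun k => rfl⟩
  have hGb : ∀ k, 2 ≤ k → ‖G k‖ ≤ max ‖G 2‖ cl := by
    intro k hk
    induction k, hk using Nat.le_induction with
    | base => exact le_max_left _ _
    | succ k hk ih =>
      have hk1 : 1 ≤ k := by omega
      have hb := hβpos k hk1
      have hb' := hβpos (k+1) (by omega)
      have ha := hα k hk1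
      have hden : 0 < (δ + α k) * β k := mul_pos (by linarith) hb
      obtain ⟨τ, hτ⟩ : ∃ τ : ℝ, τ = δ * β (k+1) / ((δ + α k) * β k) := ⟨_, rfl⟩
      have hτpos : 0 < τ := by rw [hτ]; exact div_pos (mul_pos hδ hb') hden
      have hτ1 : τ ≤ 1 := by
        rw [hτ, div_le_one hden]
        have h6 := hββ k hk1
        nlinarith
      have hs' : ((δ + α k) * β k) • s (k+1) = (δ * β k) • s k + (lam (k+1) - lam k) := by
        rw [hlamrec k hk1, hθ]
        match_scalars <;> ring
      have hδβ' : (δ * β (k+1)) • s (k+1) = τ • ((δ * β k) • s k + (lam (k+1) - lam k)) := by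
        rw [← hs', smul_smul, hτ]
        congr 1
        field_simp
      have hkey : G (k+1) = τ • G k - (1-τ) • (lam (k+1) - ls) := by
        rw [hG, hG, hδβ']
        match_scalars <;> ring
      calc ‖G (k+1)‖ ≤ ‖τ • G k‖ + ‖(1-τ) • (lam (k+1) - ls)‖ := by
            rw [hkey]; exact norm_sub_le _ _
        _ = τ * ‖G k‖ + (1-τ) * ‖lam (k+1) - ls‖ := by
            rw [norm_smul, norm_smul, Real.norm_eq_abs, Real.norm_eq_abs,
              abs_of_pos hτpos, abs_of_nonneg (by linarith)]
        _ ≤ max ‖G 2‖ cl := by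
            have h7 : cl ≤ max ‖G 2‖ cl := le_max_right _ _
            have h8 := mul_le_mul_of_nonneg_left ih (le_of_lt hτpos)
            have h9 := mul_le_mul_of_nonneg_left
              (le_trans (hlamb (k+1) (by omega)) h7) (by linarith : (0:ℝ) ≤ 1-τ)
            nlinarith
  have hfeas : ∀ k, 2 ≤ k → δ * (β k * ‖s k‖) ≤ max ‖G 2‖ cl + cl := by
    intro k hk
    have h1 := hGb k hk
    have h2 := hlamb k hk
    have h3 : ‖(δ * β k) • s k‖ ≤ ‖G k‖ + ‖lam k - ls‖ := by
      calc ‖(δ * β k) • s k‖ = ‖G k + (lam k - ls)‖ := by rw [hG]; congr 1; abel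
        _ ≤ ‖G k‖ + ‖lam k - ls‖ := norm_add_le _ _
    have h4 : ‖(δ * β k) • s k‖ = δ * β k * ‖s k‖ := by
      rw [norm_smul, Real.norm_eq_abs, abs_of_pos (mul_pos hδ (hβpos k (by omega)))]
    rw [h4] at h3
    linarith
  -- final assembly
  obtain ⟨mxG, hmxG⟩ : ∃ m : ℝ, m = max ‖G 2‖ cl := ⟨_, rfl⟩
  have hclpos : 0 < cl := by
    have h1 : 0 ≤ 2*C₀/δ := div_nonneg (by linarith) hδ.le
    rw [hcl]; linarith
  have hmxGpos : 0 < mxG := by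
    rw [hmxG]; exact lt_of_lt_of_le hclpos (le_max_right _ _)
  obtain ⟨Cs, hCsdef⟩ : ∃ c : ℝ, c = (mxG + cl)/δ := ⟨_, rfl⟩
  have hCspos : 0 < Cs := by rw [hCsdef]; positivity
  have hsb : ∀ k, 2 ≤ k → β k * ‖s k‖ ≤ Cs := by
    intro k hk
    have h1 := hfeas k hk
    rw [← hmxG] at h1
    rw [hCsdef, le_div_iff₀ hδ]
    linarith
  have hVb : ∀ k, 2 ≤ k → β k * V k ≤ C₀/δ^2 := by
    intro k hk
    have h := (hEterms k hk).1
    rw [le_div_iff₀ (by positivity : (0:ℝ) < δ^2)]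
    linarith
  constructor
  · -- boundedness
    refine ⟨max (max ‖x 1‖ (max ‖y 1‖ ‖lam 1‖))
      (max (‖xs‖ + max ‖x 2 - xs‖ cP) (max (‖ys‖ + max ‖y 2 - ys‖ cP) (‖ls‖ + cl))), ?_⟩
    intro k hk
    rcases Nat.lt_or_ge k 2 with hk2 | hk2
    · have hk1 : k = 1 := by omega
      subst hk1
      refine ⟨le_max_of_le_left (le_max_left _ _),
        le_max_of_le_left (le_max_of_le_right (le_max_left _ _)),
        le_max_of_le_left (le_max_of_le_right (le_max_right _ _))⟩
    · have hx1 : ‖x k‖ ≤ ‖xs‖ + max ‖x 2 - xs‖ cP := by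
        have h := hxb k hk2
        have h2 : ‖x k‖ ≤ ‖x k - xs‖ + ‖xs‖ := by
          have := norm_add_le (x k - xs) xs
          simpa using this
        linarith
      have hy1 : ‖y k‖ ≤ ‖ys‖ + max ‖y 2 - ys‖ cP := by
        have h := hyb k hk2
        have h2 : ‖y k‖ ≤ ‖y k - ys‖ + ‖ys‖ := by
          have := norm_add_le (y k - ys) ys
          simpa using this
        linarith
      have hl1 : ‖lam k‖ ≤ ‖ls‖ + cl := by
        have h := hlamb k hk2
        have h2 : ‖lam k‖ ≤ ‖lam k - ls‖ + ‖ls‖ := by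
          have := norm_add_le (lam k - ls) ls
          simpa using this
        linarith
      exact ⟨le_trans hx1 (le_max_of_le_right (le_max_left _ _)),
        le_trans hy1 (le_max_of_le_right (le_max_of_le_right (le_max_left _ _))),
        le_trans hl1 (le_max_of_le_right (le_max_of_le_right (le_max_right _ _)))⟩
  · -- rates
    obtain ⟨C, hCdef⟩ : ∃ C : ℝ, C = max (β 1 * (|V 1| + ‖ls‖ * ‖s 1‖ + ‖s 1‖) + 1)
        (C₀/δ^2 + ‖ls‖ * Cs + Cs + 1) := ⟨_, rfl⟩
    have hlsnn : (0:ℝ) ≤ ‖ls‖ := norm_nonneg _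
    have hCpos : 0 < C := by
      have h1 : 0 ≤ C₀/δ^2 := by positivity
      have h2 : 0 ≤ ‖ls‖ * Cs := mul_nonneg hlsnn hCspos.le
      have : (0:ℝ) < C₀/δ^2 + ‖ls‖ * Cs + Cs + 1 := by linarith
      rw [hCdef]
      exact lt_of_lt_of_le this (le_max_right _ _)
    refine ⟨C, hCpos, ?_⟩
    intro k hk
    have hβk := hβpos k hk
    have hphi : f (x k) + g (y k) - (f xs + g ys) = V k - ⟪ls, s k⟫ := by
      rw [hV]; ring
    have hip : |⟪ls, s k⟫| ≤ ‖ls‖ * ‖s k‖ := abs_real_inner_le_norm _ _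
    have hVLk := hVL k
    have key : β k * V k ≤ C ∧ β k * |f (x k) + g (y k) - (f xs + g ys)| ≤ C ∧
        β k * ‖s k‖ ≤ C := by
      rcases Nat.lt_or_ge k 2 with hk2 | hk2
      · have hk1 : k = 1 := by omega
        subst hk1
        have hb1 := hβpos 1 (by omega)
        have h1 : |f (x 1) + g (y 1) - (f xs + g ys)| ≤ |V 1| + ‖ls‖ * ‖s 1‖ := by
          rw [hphi]
          have := abs_sub (V 1) (⟪ls, s 1⟫)
          calc |V 1 - ⟪ls, s 1⟫| ≤ |V 1| + |⟪ls, s 1⟫| := abs_sub _ _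
            _ ≤ |V 1| + ‖ls‖ * ‖s 1‖ := by linarith
        have hCb : β 1 * (|V 1| + ‖ls‖ * ‖s 1‖ + ‖s 1‖) + 1 ≤ C := by
          rw [hCdef]; exact le_max_left _ _
        have hVabs : V 1 ≤ |V 1| := le_abs_self _
        have hsnn : (0:ℝ) ≤ ‖s 1‖ := norm_nonneg _
        have habs1 : (0:ℝ) ≤ |V 1| := abs_nonneg _
        have hipn : (0:ℝ) ≤ ‖ls‖ * ‖s 1‖ := mul_nonneg hlsnn hsnn
        refine ⟨?_, ?_, ?_⟩
        · nlinarith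
        · nlinarith
        · nlinarith
      · have h1 := hVb k hk2
        have h2 := hsb k hk2
        have hCb : C₀/δ^2 + ‖ls‖ * Cs + Cs + 1 ≤ C := by
          rw [hCdef]; exact le_max_right _ _
        have h3 : |f (x k) + g (y k) - (f xs + g ys)| ≤ V k + ‖ls‖ * ‖s k‖ := by
          rw [hphi, abs_le]
          have h7 := le_abs_self (⟪ls, s k⟫ : ℝ)
          have h8 := neg_le_abs (⟪ls, s k⟫ : ℝ)
          have hVk := hVnn k
          constructor <;> linarith
        have h4 : β k * |f (x k) + g (y k) - (f xs + g ys)| ≤ β k * V k + ‖ls‖ * (β k * ‖s k‖) := by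
          have := mul_le_mul_of_nonneg_left h3 hβk.le
          nlinarith
        have h5 : ‖ls‖ * (β k * ‖s k‖) ≤ ‖ls‖ * Cs := mul_le_mul_of_nonneg_left h2 hlsnn
        have h6 : 0 ≤ C₀/δ^2 := by positivity
        have h2b : 0 ≤ ‖ls‖ * Cs := mul_nonneg hlsnn hCspos.le
        refine ⟨by linarith, by linarith, by linarith⟩
    refine ⟨?_, ?_, ?_⟩
    · rw [← hVLk, le_div_iff₀ hβk]
      linarith [key.1]
    · rw [le_div_iff₀ hβk]
      linarith [key.2.1]
    · rw [show A (x k) + B (y k) - b = s k from (hs k).symm, le_div_iff₀ hβk]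
      linarith [key.2.2]
end

section
/- Suppose Assumption 1 holds, f ∈ S⁰_{μ_f}(X) and g ∈ S⁰_{μ_g}(Y) with μ_f, μ_g ≥ 0, β_k → ∞, (ε_k) is nonincreasing with ε_k ≥ 0 and Σ_{k=1}^{∞} α_kβ_kε_k < +∞, and let (x_k, y_k, λ_k) be generated by the scheme (disc) with the implicit multiplier choice λ̄_{k+1} = λ̂_{k+1} = λ_{k+1} (Algorithm 1). Let (x*,y*,λ*) be a saddle point of L. Then there exists C > 0 such that μ_f‖x_k − x*‖² + μ_g‖y_k − y*‖² ≤ C/β_k for all k ≥ 1; moreover μ_f β_k‖x_{k+1} − x_k‖² → 0 and μ_g β_k‖y_{k+1} − y_k‖² → 0 as k → ∞. -/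
/-!
A Lyapunov argument. With the Lagrangian gap `W k = L (x k) (y k) λ* - L x* y* λ* ≥ 0`, the block
energy `e_x k = ½‖Z^δ_k - x*‖² + κ_k/2 ‖x k - x*‖²`, `κ_k = δγ - 1 + δ²β_k(μ_f + ε_k) ≥ 0`, and
likewise `e_y k`, the energy `E k = δ²β_k W k + e_x k + e_y k + δ/2 ‖λ_k - λ*‖²` satisfies
`E (k+1) ≤ E k + α_kβ_kε_k (c + E (k+1)) - δ²β_k/2 (μ_f ‖x_{k+1} - x_k‖² + μ_g ‖y_{k+1} - y_k‖²)`
with `c = δ²/2 (‖x*‖² + ‖y*‖²)`. In each block one tests the increment of `Z^δ` against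
`Z^δ_{k+1} - x*` and uses the strong subgradient inequality of `f + ⟪λ*, A ·⟫` at `x_{k+1}`;
through the update of `λ` and `A x* + B y* = b`, the multiplier terms of the two blocks add up to
a telescoping difference of `δ/2 ‖λ - λ*‖²`; Assumption 1 pays for the growth of `β_k`. As
`∑ α_kβ_kε_k < ∞`, a discrete Grönwall argument bounds `E` and makes the dissipated terms
summable, and `E k ≥ δ²β_k W k` with `W k ≥ μ_f/2 ‖x k - x*‖² + μ_g/2 ‖y k - y*‖²` gives the rate.
-/

open Filter Topology
open scoped RealInnerProductSpace

section InnerProduct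

variable {X : Type*} [NormedAddCommGroup X] [InnerProductSpace ℝ X]

theorem real_inner_sub_sub_eq_half_norm_sq (a b c : X) :
    ⟪a - b, a - c⟫ = 1 / 2 * ‖a - c‖ ^ 2 - 1 / 2 * ‖b - c‖ ^ 2 + 1 / 2 * ‖a - b‖ ^ 2 := by
  have h := norm_sub_sq_real (a - c) (b - c)
  rw [sub_sub_sub_cancel_right] at h
  rw [show a - b = (a - c) - (b - c) by abel, inner_sub_left, real_inner_self_eq_norm_sq,
    real_inner_comm, sub_sub_sub_cancel_right]
  linarith

theorem half_norm_sq_sub_half_norm_sq_le_inner (p q : X) :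
    1 / 2 * ‖p‖ ^ 2 - 1 / 2 * ‖q‖ ^ 2 ≤ ⟪p - q, p⟫ := by
  have h := real_inner_sub_sub_eq_half_norm_sq p q 0
  simp only [sub_zero] at h
  linarith [sq_nonneg ‖p - q‖]

theorem neg_mul_inner_le (δ : ℝ) (a b : X) :
    -(δ * ⟪a, b⟫) ≤ δ ^ 2 / 2 * ‖a‖ ^ 2 + 1 / 2 * ‖b‖ ^ 2 := by
  have h := norm_add_sq_real (δ • a) b
  rw [norm_smul, real_inner_smul_left, Real.norm_eq_abs, mul_pow, sq_abs] at h
  nlinarith [sq_nonneg ‖δ • a + b‖]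

end InnerProduct

section Subgradient

variable {X Z : Type*} [NormedAddCommGroup X] [InnerProductSpace ℝ X]
  [NormedAddCommGroup Z] [InnerProductSpace ℝ Z]

def IsSubgradientAt (f : X → ℝ) (x v : X) : Prop :=
  ∀ w, f w - f x ≥ ⟪v, w - x⟫

-- The class `S⁰_μ` of the paper.
def StrongSubgradientIneq (f : X → ℝ) (μ : ℝ) : Prop :=
  ∀ x u v : X, IsSubgradientAt f x v → f u - f x - ⟪v, u - x⟫ ≥ μ / 2 * ‖u - x‖ ^ 2

theorem StrongSubgradientIneq.le_inner {f : X → ℝ} {μ : ℝ} (hf : StrongSubgradientIneq f μ)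
    {x v : X} (hv : IsSubgradientAt f x v) (y : X) :
    f x - f y + μ / 2 * ‖x - y‖ ^ 2 ≤ ⟪v, x - y⟫ := by
  have h := hf x y v hv
  rw [← neg_sub x y, inner_neg_right, norm_neg] at h
  linarith

theorem StrongSubgradientIneq.sq_le_sub_of_forall_le {f : X → ℝ} {μ : ℝ}
    (hf : StrongSubgradientIneq f μ) {x : X} (hx : ∀ w, f x ≤ f w) (y : X) :
    μ / 2 * ‖y - x‖ ^ 2 ≤ f y - f x := by
  have h := hf x y 0 fun w => by simpa using hx w
  simpa using h

variable [CompleteSpace X] [CompleteSpace Z]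

theorem inner_add_adjoint_apply (A : X →L[ℝ] Z) (l : Z) (v x w : X) :
    ⟪v + ContinuousLinearMap.adjoint A l, w - x⟫ = ⟪v, w - x⟫ + (⟪l, A w⟫ - ⟪l, A x⟫) := by
  rw [inner_add_left, ContinuousLinearMap.adjoint_inner_left, map_sub, inner_sub_right l]

theorem isSubgradientAt_add_inner_iff {f : X → ℝ} (A : X →L[ℝ] Z) (l : Z) {x v : X} :
    IsSubgradientAt (fun w => f w + ⟪l, A w⟫) x (v + ContinuousLinearMap.adjoint A l) ↔
      IsSubgradientAt f x v := by
  refine forall_congr' fun w => ?_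
  rw [inner_add_adjoint_apply]
  constructor <;> intro h <;> linarith

theorem StrongSubgradientIneq.add_inner {f : X → ℝ} {μ : ℝ} (hf : StrongSubgradientIneq f μ)
    (A : X →L[ℝ] Z) (l : Z) : StrongSubgradientIneq (fun w => f w + ⟪l, A w⟫) μ := by
  intro x u v hv
  rw [← sub_add_cancel v (ContinuousLinearMap.adjoint A l)] at hv ⊢
  have h := hf x u _ ((isSubgradientAt_add_inner_iff A l).1 hv)
  rw [inner_add_adjoint_apply]
  linarith

end Subgradient

section Saddle

variable {X Y Z : Type*} [NormedAddCommGroup X] [InnerProductSpace ℝ X]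
  [NormedAddCommGroup Y] [InnerProductSpace ℝ Y] [NormedAddCommGroup Z] [InnerProductSpace ℝ Z]
  {f : X → ℝ} {g : Y → ℝ} {A : X →L[ℝ] Z} {B : Y →L[ℝ] Z} {b : Z} {L : X → Y → Z → ℝ}
  {xs : X} {ys : Y} {ls : Z}

theorem feasible_of_forall_lagrangian_le (hL : ∀ x y l, L x y l = f x + g y + ⟪l, A x + B y - b⟫)
    (hmax : ∀ l, L xs ys l ≤ L xs ys ls) : A xs + B ys = b := by
  have h := hmax (ls + (A xs + B ys - b))
  rw [hL, hL, inner_add_left] at h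
  rw [← sub_eq_zero, ← inner_self_eq_zero (𝕜 := ℝ)]
  linarith [real_inner_self_nonneg (x := A xs + B ys - b)]

theorem lagrangian_eq_add (hL : ∀ x y l, L x y l = f x + g y + ⟪l, A x + B y - b⟫) (x : X) (y : Y)
    (l : Z) : L x y l = (f x + ⟪l, A x⟫) + (g y + ⟪l, B y⟫) - ⟪l, b⟫ := by
  rw [hL, inner_sub_right, inner_add_right]
  ring

theorem sq_le_lagrangian_sub_of_forall_le [CompleteSpace X] [CompleteSpace Y] [CompleteSpace Z]
    (hL : ∀ x y l, L x y l = f x + g y + ⟪l, A x + B y - b⟫) {μf μg : ℝ}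
    (hf : StrongSubgradientIneq f μf) (hg : StrongSubgradientIneq g μg)
    (hmin : ∀ x y, L xs ys ls ≤ L x y ls) (x : X) (y : Y) :
    μf / 2 * ‖x - xs‖ ^ 2 + μg / 2 * ‖y - ys‖ ^ 2 ≤ L x y ls - L xs ys ls := by
  have hsplit := lagrangian_eq_add hL
  have hx := (hf.add_inner A ls).sq_le_sub_of_forall_le (x := xs)
    (fun w => by linarith [hmin w ys, hsplit w ys ls, hsplit xs ys ls]) x
  have hy := (hg.add_inner B ls).sq_le_sub_of_forall_le (x := ys)
    (fun w => by linarith [hmin xs w, hsplit xs w ls, hsplit xs ys ls]) y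
  rw [hsplit, hsplit]
  linarith

end Saddle

section Gronwall

variable {E θ D : ℕ → ℝ} {N : ℕ}

theorem sum_Ico_le_tsum_nat_add (hθ : Summable θ) {K : ℕ} (hθ0 : ∀ k ≥ K, 0 ≤ θ k) (n : ℕ) :
    ∑ k ∈ Finset.Ico K n, θ k ≤ ∑' k, θ (k + K) := by
  rw [Finset.sum_Ico_eq_sum_range]
  simp_rw [add_comm K]
  exact ((summable_nat_add_iff K).2 hθ).sum_le_tsum _ fun k _ => hθ0 _ (Nat.le_add_left K k)

theorem summable_of_le_sub_add (hD : ∀ k ≥ N, 0 ≤ D k) (hE : ∀ k ≥ N, 0 ≤ E k)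
    (hθ : Summable θ) (hθ0 : ∀ k ≥ N, 0 ≤ θ k) (h : ∀ k ≥ N, D k ≤ E k - E (k + 1) + θ k) :
    Summable D := by
  rw [← summable_nat_add_iff N]
  refine summable_of_sum_range_le (c := E N + ∑' k, θ (k + N))
    (fun k => hD _ (Nat.le_add_left N k)) fun n => ?_
  calc ∑ k ∈ Finset.range n, D (k + N)
      ≤ ∑ k ∈ Finset.range n, (E (k + N) - E (k + 1 + N) + θ (k + N)) :=
        Finset.sum_le_sum fun k _ => by
          simpa only [add_right_comm k 1 N] using h (k + N) (Nat.le_add_left N k)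
    _ = E N - E (n + N) + ∑ k ∈ Finset.Ico N (n + N), θ k := by
        rw [Finset.sum_add_distrib, Finset.sum_range_sub' (fun k => E (k + N)),
          Finset.sum_Ico_eq_sum_range, Nat.add_sub_cancel]
        simp_rw [add_comm N, zero_add]
    _ ≤ E N + ∑' k, θ (k + N) := by
        linarith [hE (n + N) (Nat.le_add_left N n), sum_Ico_le_tsum_nat_add hθ hθ0 (n + N)]

theorem bddAbove_and_summable_of_le_add_mul {c : ℝ} (hc : 0 ≤ c) (hE : ∀ k ≥ N, 0 ≤ E k)
    (hθ0 : ∀ k ≥ N, 0 ≤ θ k) (hD : ∀ k ≥ N, 0 ≤ D k) (hθ : Summable θ)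
    (hstep : ∀ k ≥ N, E (k + 1) ≤ E k + θ k * (c + E (k + 1)) - D k) :
    BddAbove (Set.range E) ∧ Summable D := by
  obtain ⟨K, hK⟩ := eventually_atTop.1 <| (eventually_ge_atTop N).and <|
    hθ.tendsto_atTop_zero.eventually (eventually_le_nhds one_half_pos)
  -- once `θ k ≤ 1 / 2`, the implicit term `θ k * E (k + 1)` is absorbed into the left side
  have hgrow : ∀ k ≥ K, E (k + 1) + c ≤ (1 + 2 * θ k) * (E k + c) + 0 := by
    intro k hk
    obtain ⟨hNk, hθk⟩ := hK k hk
    have hθ' := hθ0 k hNk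
    have hshrink : (1 - θ k) * (E (k + 1) + c) ≤ E k + c := by
      nlinarith [hstep k hNk, hD k hNk]
    nlinarith [mul_le_mul_of_nonneg_left hshrink (by linarith : 0 ≤ 1 + 2 * θ k),
      mul_nonneg (mul_nonneg hθ' (by linarith : 0 ≤ 1 - 2 * θ k))
        (by linarith [hE (k + 1) (by omega)] : 0 ≤ E (k + 1) + c)]
  have hKN : N ≤ K := (hK K le_rfl).1
  have htail : ∀ n ≥ K, E n ≤ (E K + c) * Real.exp (2 * ∑' k, θ (k + K)) := by
    intro n hn
    have h := discrete_gronwall (u := fun k => E k + c) (by linarith [hE K hKN]) hgrow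
      (fun k hk => by linarith [hθ0 k (hKN.trans hk)]) (fun _ _ => le_rfl) hn
    simp only [Finset.sum_const_zero, add_zero, ← Finset.mul_sum] at h
    calc E n ≤ E n + c := le_add_of_nonneg_right hc
      _ ≤ _ := h.trans <| by
        gcongr
        · linarith [hE K hKN]
        · exact sum_Ico_le_tsum_nat_add hθ (fun k hk => hθ0 k (hKN.trans hk)) n
  obtain ⟨M₀, hM₀⟩ := ((Finset.range K).image E).bddAbove
  set M := max M₀ ((E K + c) * Real.exp (2 * ∑' k, θ (k + K)))
  have hM : ∀ k, E k ≤ M := by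
    intro k
    rcases lt_or_ge k K with hk | hk
    · exact (hM₀ (by simpa using ⟨k, hk, rfl⟩)).trans (le_max_left _ _)
    · exact (htail k hk).trans (le_max_right _ _)
  refine ⟨⟨M, by rintro _ ⟨k, rfl⟩; exact hM k⟩, ?_⟩
  refine summable_of_le_sub_add hD hE (hθ.mul_right (c + M))
    (fun k hk => mul_nonneg (hθ0 k hk) (by linarith [hE N le_rfl, hM N])) fun k hk => ?_
  nlinarith [hstep k hk, hM (k + 1), hθ0 k hk]

theorem tendsto_zero_of_summable_mul_add {a b : ℕ → ℝ} {c : ℝ} (hc : c ≠ 0)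
    (ha : ∀ᶠ k in atTop, 0 ≤ a k) (hb : ∀ᶠ k in atTop, 0 ≤ b k)
    (h : Summable fun k => c * (a k + b k)) :
    Tendsto a atTop (𝓝 0) ∧ Tendsto b atTop (𝓝 0) := by
  have h0 := ((summable_mul_left_iff hc).1 h).tendsto_atTop_zero
  constructor
  · refine squeeze_zero' ha ?_ h0
    filter_upwards [hb] with k hk using le_add_of_nonneg_right hk
  · refine squeeze_zero' hb ?_ h0
    filter_upwards [ha] with k hk using le_add_of_nonneg_left hk

end Gronwall

section Block

variable {X : Type*} [NormedAddCommGroup X] [InnerProductSpace ℝ X]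

-- `δ • z + (1 - δ * γ) • x` is the point `Z^δ` of the scheme.
noncomputable def blockEnergy (δ γ κ : ℝ) (xs z x : X) : ℝ :=
  1 / 2 * ‖δ • z + (1 - δ * γ) • x - xs‖ ^ 2 + κ / 2 * ‖x - xs‖ ^ 2

theorem half_norm_sq_le_blockEnergy {κ : ℝ} (hκ : 0 ≤ κ) (δ γ : ℝ) (xs z x : X) :
    1 / 2 * ‖δ • z + (1 - δ * γ) • x - xs‖ ^ 2 ≤ blockEnergy δ γ κ xs z x :=
  le_add_of_nonneg_right (by positivity)

variable {a β δ γ μ ε : ℝ} {x x' z z' P u d : X}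

theorem extrapolated_eq (hz' : z' = (1 / a) • (x' - x) + γ • x')
    (hP : P = δ • z' + (1 - δ * γ) • x') : P = x' + (δ / a) • (x' - x) := by
  rw [hP, hz']; module

theorem extrapolated_sub_eq (ha : a ≠ 0) (hz' : z' = (1 / a) • (x' - x) + γ • x')
    (hP : P = δ • z' + (1 - δ * γ) • x')
    (hstep : (1 / a) • (z' - z) = -(β • (u + d + ε • x' - μ • (x' - P)))) :
    P - (δ • z + (1 - δ * γ) • x)
      = (-(a * β * δ)) • (u + d + ε • x') + (1 - δ * γ - β * δ ^ 2 * μ) • (x' - x) := by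
  have hz : z' - z = a • ((1 / a) • (z' - z)) := by
    rw [smul_smul, mul_one_div_cancel ha, one_smul]
  calc _ = δ • (z' - z) + (1 - δ * γ) • (x' - x) := by rw [hP]; module
    _ = _ := by
      rw [hz, hstep, extrapolated_eq hz' hP]
      match_scalars <;> field_simp <;> ring

theorem energy_weight_succ_le {β' ε' : ℝ} (ha : 0 ≤ a) (hβ : 0 ≤ β) (hδ : 0 ≤ δ) (hμ : 0 ≤ μ)
    (hε' : 0 ≤ ε') (hε'ε : ε' ≤ ε) (hβ' : δ * β' ≤ δ * β + a * β) :
    δ ^ 2 * β' * (μ + ε') ≤ δ ^ 2 * β * (μ + ε) + a * β * δ * (μ + 2 * ε) := by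
  calc δ ^ 2 * β' * (μ + ε') = δ * (δ * β') * (μ + ε') := by ring
    _ ≤ δ * (δ * β + a * β) * (μ + ε) := by gcongr
    _ ≤ _ := by nlinarith [mul_nonneg (mul_nonneg ha hβ) (mul_nonneg hδ (hε'.trans hε'ε))]

theorem inner_increment_extrapolated_le (ha : 0 < a) (hβ : 0 ≤ β) (hδ : 0 ≤ δ)
    (hδγ : 1 ≤ δ * γ) (hμ : 0 ≤ μ) (hε : 0 ≤ ε) {F : X → ℝ} (hF : StrongSubgradientIneq F μ)
    {xs : X} (hu : IsSubgradientAt F x' u) (hz' : z' = (1 / a) • (x' - x) + γ • x')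
    (hP : P = δ • z' + (1 - δ * γ) • x')
    (hstep : (1 / a) • (z' - z) = -(β • (u + d + ε • x' - μ • (x' - P)))) :
    ⟪P - (δ • z + (1 - δ * γ) • x), P - xs⟫ ≤
      - a * β * δ * ⟪d, P - xs⟫ - β * δ ^ 2 * (F x' - F x) - a * β * δ * (F x' - F xs)
      - β * δ ^ 2 * (μ + ε) / 2 * ‖x' - x‖ ^ 2
      + a * β * ε * (δ ^ 2 / 2 * ‖xs‖ ^ 2 + 1 / 2 * ‖P - xs‖ ^ 2)
      - (δ * γ - 1 + δ ^ 2 * β * (μ + ε)) / 2 * (‖x' - xs‖ ^ 2 - ‖x - xs‖ ^ 2)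
      - a * β * δ * (μ / 2 + ε) * ‖x' - xs‖ ^ 2 := by
  have hp : P - xs = (x' - xs) + (δ / a) • (x' - x) := by rw [extrapolated_eq hz' hP]; abel
  rw [extrapolated_sub_eq ha.ne' hz' hP hstep]
  set p := P - xs
  set s := x' - xs
  set w := x' - x
  have hexpand : ∀ v, a * ⟪v, p⟫ = a * ⟪v, s⟫ + δ * ⟪v, w⟫ := fun v => by
    rw [hp, inner_add_right, real_inner_smul_right]
    field_simp
  have hws : ⟪w, s⟫ = 1 / 2 * ‖s‖ ^ 2 - 1 / 2 * ‖x - xs‖ ^ 2 + 1 / 2 * ‖w‖ ^ 2 :=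
    real_inner_sub_sub_eq_half_norm_sq x' x xs
  -- `w` enters the increment with the coefficient `1 - δγ - βδ²μ ≤ 0`, so `⟪w, p⟫` may be
  -- replaced by the smaller `⟪w, s⟫`
  have hwp : ⟪w, s⟫ ≤ ⟪w, p⟫ := by
    have := hexpand w
    rw [real_inner_self_eq_norm_sq] at this
    nlinarith [sq_nonneg ‖w‖]
  have hc : 0 ≤ δ * γ - 1 + β * δ ^ 2 * μ := by positivity
  have hu_p : a * β * δ * ⟪u, p⟫ = a * β * δ * ⟪u, s⟫ + β * δ ^ 2 * ⟪u, w⟫ := by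
    linear_combination (β * δ) * hexpand u
  have hs_p : a * β * δ * ε * ⟪s, p⟫ = a * β * δ * ε * ‖s‖ ^ 2 + β * δ ^ 2 * ε * ⟪w, s⟫ := by
    rw [← real_inner_self_eq_norm_sq, real_inner_comm s w]
    linear_combination (β * δ * ε) * hexpand s
  have hx'p : ⟪x', p⟫ = ⟪s, p⟫ + ⟪xs, p⟫ := by rw [← inner_add_left, sub_add_cancel]
  have h1 := mul_le_mul_of_nonneg_left (hF.le_inner hu x) (by positivity : 0 ≤ β * δ ^ 2)
  have h2 := mul_le_mul_of_nonneg_left (hF.le_inner hu xs) (by positivity : 0 ≤ a * β * δ)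
  have h3 := mul_le_mul_of_nonneg_left (neg_mul_inner_le δ xs p) (by positivity : 0 ≤ a * β * ε)
  have h4 := mul_le_mul_of_nonneg_left hwp hc
  have h5 : 0 ≤ (δ * γ - 1 + β * δ ^ 2 * μ) * ‖w‖ ^ 2 := by positivity
  rw [hws] at h4 hs_p
  simp only [inner_add_left, real_inner_smul_left, hx'p]
  linarith

theorem blockEnergy_succ_le {β' ε' : ℝ} (ha : 0 < a) (hβ : 0 ≤ β) (hδ : 0 ≤ δ)
    (hδγ : 1 ≤ δ * γ) (hμ : 0 ≤ μ) (hε' : 0 ≤ ε') (hε'ε : ε' ≤ ε)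
    (hβ' : δ * β' ≤ δ * β + a * β) {F : X → ℝ} (hF : StrongSubgradientIneq F μ) {xs : X}
    (hu : IsSubgradientAt F x' u) (hz' : z' = (1 / a) • (x' - x) + γ • x')
    (hP : P = δ • z' + (1 - δ * γ) • x')
    (hstep : (1 / a) • (z' - z) = -(β • (u + d + ε • x' - μ • (x' - P)))) :
    blockEnergy δ γ (δ * γ - 1 + δ ^ 2 * β' * (μ + ε')) xs z' x' ≤
      blockEnergy δ γ (δ * γ - 1 + δ ^ 2 * β * (μ + ε)) xs z x
      - a * β * δ * ⟪d, P - xs⟫ - β * δ ^ 2 * (F x' - F x) - a * β * δ * (F x' - F xs)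
      - β * δ ^ 2 * (μ + ε) / 2 * ‖x' - x‖ ^ 2
      + a * β * ε * (δ ^ 2 / 2 * ‖xs‖ ^ 2 + 1 / 2 * ‖P - xs‖ ^ 2) := by
  have hinc := inner_increment_extrapolated_le ha hβ hδ hδγ hμ (hε'.trans hε'ε) hF (xs := xs) hu
    hz' hP hstep
  have hsq := half_norm_sq_sub_half_norm_sq_le_inner (P - xs) (δ • z + (1 - δ * γ) • x - xs)
  have hweight := mul_le_mul_of_nonneg_right
    (energy_weight_succ_le ha.le hβ hδ hμ hε' hε'ε hβ') (sq_nonneg ‖x' - xs‖)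
  rw [sub_sub_sub_cancel_right] at hsq
  unfold blockEnergy
  rw [← hP]
  linarith

end Block

section Lyapunov

variable {X Y Z : Type*} [NormedAddCommGroup X] [InnerProductSpace ℝ X]
  [NormedAddCommGroup Y] [InnerProductSpace ℝ Y] [NormedAddCommGroup Z]

theorem mul_inner_adjoint_add_inner_adjoint_eq [InnerProductSpace ℝ Z] [CompleteSpace X]
    [CompleteSpace Y] [CompleteSpace Z]
    {A : X →L[ℝ] Z} {B : Y →L[ℝ] Z} {b : Z} {xs P : X} {ys Q : Y} {ls l l' : Z} {c : ℝ}
    (hfeas : A xs + B ys = b) (hl' : l' = l + c • (A P + B Q - b)) :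
    c * (⟪ContinuousLinearMap.adjoint A (l' - ls), P - xs⟫
        + ⟪ContinuousLinearMap.adjoint B (l' - ls), Q - ys⟫)
      = 1 / 2 * ‖l' - ls‖ ^ 2 - 1 / 2 * ‖l - ls‖ ^ 2 + 1 / 2 * ‖l' - l‖ ^ 2 := by
  rw [ContinuousLinearMap.adjoint_inner_left, ContinuousLinearMap.adjoint_inner_left,
    ← inner_add_right, ← real_inner_smul_right, map_sub, map_sub,
    show A P - A xs + (B Q - B ys) = A P + B Q - b by rw [← hfeas]; abel,
    ← sub_eq_of_eq_add' hl', real_inner_comm]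
  exact real_inner_sub_sub_eq_half_norm_sq l' l ls

variable (L : X → Y → Z → ℝ) (δ γ μf μg : ℝ) (β ε : ℕ → ℝ) (x : ℕ → X) (y : ℕ → Y)
  (lam : ℕ → Z) (Zs : ℕ → X) (Hs : ℕ → Y) (xs : X) (ys : Y) (ls : Z)

noncomputable def lyapunov (k : ℕ) : ℝ :=
  δ ^ 2 * β k * (L (x k) (y k) ls - L xs ys ls)
    + blockEnergy δ γ (δ * γ - 1 + δ ^ 2 * β k * (μf + ε k)) xs (Zs k) (x k)
    + blockEnergy δ γ (δ * γ - 1 + δ ^ 2 * β k * (μg + ε k)) ys (Hs k) (y k)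
    + δ / 2 * ‖lam k - ls‖ ^ 2

local notation "𝓔" => lyapunov L δ γ μf μg β ε x y lam Zs Hs xs ys ls

variable {L δ γ μf μg β ε x y lam Zs Hs xs ys ls}

theorem le_lyapunov (hδ : 0 ≤ δ) (hδγ : 1 ≤ δ * γ) (hμf : 0 ≤ μf) (hμg : 0 ≤ μg) {k : ℕ}
    (hβ : 0 ≤ β k) (hε : 0 ≤ ε k)
    (hgap : μf / 2 * ‖x k - xs‖ ^ 2 + μg / 2 * ‖y k - ys‖ ^ 2 ≤ L (x k) (y k) ls - L xs ys ls) :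
    δ ^ 2 * β k * (μf / 2 * ‖x k - xs‖ ^ 2 + μg / 2 * ‖y k - ys‖ ^ 2)
        + 1 / 2 * ‖δ • Zs k + (1 - δ * γ) • x k - xs‖ ^ 2
        + 1 / 2 * ‖δ • Hs k + (1 - δ * γ) • y k - ys‖ ^ 2 ≤ 𝓔 k := by
  have hκ : ∀ μ, 0 ≤ μ → 0 ≤ δ * γ - 1 + δ ^ 2 * β k * (μ + ε k) := fun μ hμ =>
    add_nonneg (sub_nonneg.2 hδγ) (by positivity)
  have hx := half_norm_sq_le_blockEnergy (hκ μf hμf) δ γ xs (Zs k) (x k)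
  have hy := half_norm_sq_le_blockEnergy (hκ μg hμg) δ γ ys (Hs k) (y k)
  have hgap' := mul_le_mul_of_nonneg_left hgap (by positivity : 0 ≤ δ ^ 2 * β k)
  unfold lyapunov
  linarith [mul_nonneg hδ (sq_nonneg ‖lam k - ls‖)]

theorem lyapunov_nonneg (hδ : 0 ≤ δ) (hδγ : 1 ≤ δ * γ) (hμf : 0 ≤ μf) (hμg : 0 ≤ μg) {k : ℕ}
    (hβ : 0 ≤ β k) (hε : 0 ≤ ε k)
    (hgap : μf / 2 * ‖x k - xs‖ ^ 2 + μg / 2 * ‖y k - ys‖ ^ 2 ≤ L (x k) (y k) ls - L xs ys ls) :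
    0 ≤ 𝓔 k :=
  le_trans (by positivity) (le_lyapunov hδ hδγ hμf hμg hβ hε hgap)

theorem exists_pos_le_div_of_bddAbove_lyapunov {N : ℕ} (hδ : 0 < δ) (hδγ : 1 ≤ δ * γ)
    (hμf : 0 ≤ μf) (hμg : 0 ≤ μg) (hβ : ∀ k ≥ N, 0 < β k) (hε : ∀ k ≥ N, 0 ≤ ε k)
    (hgap : ∀ x' y', μf / 2 * ‖x' - xs‖ ^ 2 + μg / 2 * ‖y' - ys‖ ^ 2 ≤ L x' y' ls - L xs ys ls)
    (hE : BddAbove (Set.range 𝓔)) :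
    ∃ C : ℝ, 0 < C ∧ ∀ k ≥ N, μf * ‖x k - xs‖ ^ 2 + μg * ‖y k - ys‖ ^ 2 ≤ C / β k := by
  obtain ⟨M, hM⟩ := hE
  refine ⟨2 * max M 1 / δ ^ 2, by positivity, fun k hk => ?_⟩
  have hβk := hβ k hk
  rw [le_div_iff₀ hβk, le_div_iff₀ (by positivity)]
  nlinarith [le_lyapunov (lam := lam) (Zs := Zs) (Hs := Hs) hδ.le hδγ hμf hμg hβk.le (hε k hk)
      (hgap (x k) (y k)), hM ⟨k, rfl⟩, le_max_left M 1,
    sq_nonneg ‖δ • Zs k + (1 - δ * γ) • x k - xs‖, sq_nonneg ‖δ • Hs k + (1 - δ * γ) • y k - ys‖]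

theorem lyapunov_succ_le [InnerProductSpace ℝ Z] [CompleteSpace X] [CompleteSpace Y]
    [CompleteSpace Z] {f : X → ℝ} {g : Y → ℝ} {A : X →L[ℝ] Z} {B : Y →L[ℝ] Z} {b : Z}
    (hL : ∀ x y l, L x y l = f x + g y + ⟪l, A x + B y - b⟫)
    (hf : StrongSubgradientIneq f μf) (hg : StrongSubgradientIneq g μg) (hfeas : A xs + B ys = b)
    (hgap : ∀ x' y', μf / 2 * ‖x' - xs‖ ^ 2 + μg / 2 * ‖y' - ys‖ ^ 2 ≤ L x' y' ls - L xs ys ls)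
    (hδ : 0 ≤ δ) (hδγ : 1 ≤ δ * γ) (hμf : 0 ≤ μf) (hμg : 0 ≤ μg) {α : ℕ → ℝ} {k : ℕ}
    (hα : 0 < α k) (hβ : 0 ≤ β k) (hβ' : 0 ≤ β (k + 1)) (hε' : 0 ≤ ε (k + 1))
    (hεε : ε (k + 1) ≤ ε k) (hββ : δ * β (k + 1) ≤ δ * β k + α k * β k) {P : X} {Q : Y}
    (hZ : Zs (k + 1) = (1 / α k) • (x (k + 1) - x k) + γ • x (k + 1))
    (hP : P = δ • Zs (k + 1) + (1 - δ * γ) • x (k + 1))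
    (hH : Hs (k + 1) = (1 / α k) • (y (k + 1) - y k) + γ • y (k + 1))
    (hQ : Q = δ • Hs (k + 1) + (1 - δ * γ) • y (k + 1))
    (hlam : lam (k + 1) = lam k + (α k * β k) • (A P + B Q - b))
    (hstep : ∃ u v, IsSubgradientAt f (x (k + 1)) u ∧ IsSubgradientAt g (y (k + 1)) v ∧
      (1 / α k) • (Zs (k + 1) - Zs k) = -(β k • (u + ContinuousLinearMap.adjoint A (lam (k + 1))
        + ε k • x (k + 1) - μf • (x (k + 1) - P))) ∧
      (1 / α k) • (Hs (k + 1) - Hs k) = -(β k • (v + ContinuousLinearMap.adjoint B (lam (k + 1))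
        + ε k • y (k + 1) - μg • (y (k + 1) - Q)))) :
    𝓔 (k + 1) ≤ 𝓔 k + α k * β k * ε k * (δ ^ 2 / 2 * (‖xs‖ ^ 2 + ‖ys‖ ^ 2) + 𝓔 (k + 1))
      - δ ^ 2 / 2 * (μf * β k * ‖x (k + 1) - x k‖ ^ 2 + μg * β k * ‖y (k + 1) - y k‖ ^ 2) := by
  obtain ⟨u, v, hu, hv, hux, hvy⟩ := hstep
  have hx := blockEnergy_succ_le hα hβ hδ hδγ hμf hε' hεε hββ (hf.add_inner A ls) (xs := xs)
    ((isSubgradientAt_add_inner_iff A ls).2 hu) hZ hP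
    (d := ContinuousLinearMap.adjoint A (lam (k + 1) - ls)) (by rw [hux, map_sub]; abel_nf)
  have hy := blockEnergy_succ_le hα hβ hδ hδγ hμg hε' hεε hββ (hg.add_inner B ls) (xs := ys)
    ((isSubgradientAt_add_inner_iff B ls).2 hv) hH hQ
    (d := ContinuousLinearMap.adjoint B (lam (k + 1) - ls)) (by rw [hvy, map_sub]; abel_nf)
  have hε : 0 ≤ ε k := hε'.trans hεε
  have hcross := congrArg (δ * ·) (mul_inner_adjoint_add_inner_adjoint_eq (ls := ls) hfeas hlam)
  have hgap' := hgap (x (k + 1)) (y (k + 1))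
  have hlow := le_lyapunov (lam := lam) (Zs := Zs) (Hs := Hs) hδ hδγ hμf hμg hβ' hε' hgap'
  rw [← hP, ← hQ] at hlow
  have hWnn : 0 ≤ L (x (k + 1)) (y (k + 1)) ls - L xs ys ls := le_trans (by positivity) hgap'
  have h1 := mul_le_mul_of_nonneg_right hββ (mul_nonneg hδ hWnn)
  have h2 := mul_le_mul_of_nonneg_left hlow (by positivity : 0 ≤ α k * β k * ε k)
  have h3 : 0 ≤ δ * ‖lam (k + 1) - lam k‖ ^ 2 := by positivity
  have h4 : 0 ≤ β k * δ ^ 2 * ε k * (‖x (k + 1) - x k‖ ^ 2 + ‖y (k + 1) - y k‖ ^ 2) := by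
    positivity
  have h5 : 0 ≤ α k * β k * ε k * (δ ^ 2 * β (k + 1)
      * (μf / 2 * ‖x (k + 1) - xs‖ ^ 2 + μg / 2 * ‖y (k + 1) - ys‖ ^ 2)) := by positivity
  beta_reduce at hx hy hcross
  unfold lyapunov at h2 ⊢
  simp only [lagrangian_eq_add hL] at h1 h2 ⊢
  linarith

end Lyapunov

theorem trajectory_rates_strongly_convex_general
    {X Y Z : Type*}
    [NormedAddCommGroup X] [InnerProductSpace ℝ X] [CompleteSpace X]
    [NormedAddCommGroup Y] [InnerProductSpace ℝ Y] [CompleteSpace Y]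
    [NormedAddCommGroup Z] [InnerProductSpace ℝ Z] [CompleteSpace Z]
    (f : X → ℝ) (g : Y → ℝ)
    (A : X →L[ℝ] Z) (B : Y →L[ℝ] Z) (b : Z)
    (μf μg : ℝ) (hμf : 0 ≤ μf) (hμg : 0 ≤ μg)
    (hfS : ∀ x u v : X, (∀ w, f w - f x ≥ ⟪v, w - x⟫) →
        f u - f x - ⟪v, u - x⟫ ≥ μf / 2 * ‖u - x‖ ^ 2)
    (hgS : ∀ y u v : Y, (∀ w, g w - g y ≥ ⟪v, w - y⟫) →
        g u - g y - ⟪v, u - y⟫ ≥ μg / 2 * ‖u - y‖ ^ 2)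
    (L : X → Y → Z → ℝ)
    (hL : ∀ x y l, L x y l = f x + g y + ⟪l, A x + B y - b⟫)
    (δ γ : ℝ) (hδ : 0 < δ)
    (α β ε : ℕ → ℝ)
    (hα : ∀ k, 1 ≤ k → 0 < α k)
    (hβpos : ∀ k, 1 ≤ k → 0 < β k)
    (hεnn : ∀ k, 1 ≤ k → 0 ≤ ε k)
    (x : ℕ → X) (y : ℕ → Y) (lam : ℕ → Z)
    (Zs Zd : ℕ → X) (Hs Hd : ℕ → Y)
    (hZ : ∀ k, 1 ≤ k → Zs (k + 1) = (1 / α k) • (x (k + 1) - x k) + γ • x (k + 1))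
    (hZd : ∀ k, 1 ≤ k → Zd (k + 1) = δ • Zs (k + 1) + (1 - δ * γ) • x (k + 1))
    (hH : ∀ k, 1 ≤ k → Hs (k + 1) = (1 / α k) • (y (k + 1) - y k) + γ • y (k + 1))
    (hHd : ∀ k, 1 ≤ k → Hd (k + 1) = δ • Hs (k + 1) + (1 - δ * γ) • y (k + 1))
    (hlam : ∀ k, 1 ≤ k → lam (k + 1) = lam k + (α k * β k) • (A (Zd (k + 1)) + B (Hd (k + 1)) - b))
    (hstep : ∀ k, 1 ≤ k → ∃ u v,
        (∀ w, f w - f (x (k + 1)) ≥ ⟪u, w - x (k + 1)⟫) ∧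
        (∀ w, g w - g (y (k + 1)) ≥ ⟪v, w - y (k + 1)⟫) ∧
        (1 / α k) • (Zs (k + 1) - Zs k) =
          -(β k • (u + (ContinuousLinearMap.adjoint A) (lam (k + 1)) + ε k • x (k + 1)
              - μf • (x (k + 1) - Zd (k + 1)))) ∧
        (1 / α k) • (Hs (k + 1) - Hs k) =
          -(β k • (v + (ContinuousLinearMap.adjoint B) (lam (k + 1)) + ε k • y (k + 1)
              - μg • (y (k + 1) - Hd (k + 1)))))
    (hδγ : δ * γ - 1 ≥ 0)
    (hββ : ∀ k, 1 ≤ k → δ * β (k + 1) ≤ δ * β k + α k * β k)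
    (hεmono : ∀ k, 1 ≤ k → ε (k + 1) ≤ ε k)
    (hsum : Summable (fun k => α k * β k * ε k))
    (xs : X) (ys : Y) (ls : Z)
    (hsaddle : ∀ x' y' l', L xs ys l' ≤ L xs ys ls ∧ L xs ys ls ≤ L x' y' ls)
    :
    (∃ C : ℝ, 0 < C ∧ ∀ k, 1 ≤ k →
        μf * ‖x k - xs‖ ^ 2 + μg * ‖y k - ys‖ ^ 2 ≤ C / β k) ∧
    Tendsto (fun k => μf * β k * ‖x (k + 1) - x k‖ ^ 2) atTop (𝓝 0) ∧
    Tendsto (fun k => μg * β k * ‖y (k + 1) - y k‖ ^ 2) atTop (𝓝 0) := by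
  have hδγ' : 1 ≤ δ * γ := sub_nonneg.1 hδγ
  have hfeas := feasible_of_forall_lagrangian_le hL fun l => (hsaddle xs ys l).1
  have hgap := sq_le_lagrangian_sub_of_forall_le hL hfS hgS fun x' y' => (hsaddle x' y' ls).2
  have hdesc := fun k (hk : 1 ≤ k) => lyapunov_succ_le (lam := lam) hL hfS hgS hfeas hgap
    hδ.le hδγ' hμf hμg (hα k hk) (hβpos k hk).le (hβpos (k + 1) (by omega)).le
    (hεnn (k + 1) (by omega)) (hεmono k hk) (hββ k hk) (hZ k hk) (hZd k hk) (hH k hk) (hHd k hk) (hlam k hk) (hstep k hk)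
  obtain ⟨hE, hD⟩ := bddAbove_and_summable_of_le_add_mul (N := 1) (by positivity)
    (fun k hk => lyapunov_nonneg hδ.le hδγ' hμf hμg (hβpos k hk).le (hεnn k hk) (hgap _ _))
    (fun k hk => mul_nonneg (mul_nonneg (hα k hk).le (hβpos k hk).le) (hεnn k hk))
    (fun k hk => by have := hβpos k hk; positivity) hsum hdesc
  have hβ_ev : ∀ᶠ k in atTop, 0 < β k := eventually_atTop.2 ⟨1, hβpos⟩
  exact ⟨exists_pos_le_div_of_bddAbove_lyapunov hδ hδγ' hμf hμg hβpos hεnn hgap hE,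
    tendsto_zero_of_summable_mul_add (by positivity)
      (hβ_ev.mono fun k hk => by positivity) (hβ_ev.mono fun k hk => by positivity) hD⟩

theorem trajectory_rates_strongly_convex
    {X Y Z : Type*}
    [NormedAddCommGroup X] [InnerProductSpace ℝ X] [CompleteSpace X]
    [NormedAddCommGroup Y] [InnerProductSpace ℝ Y] [CompleteSpace Y]
    [NormedAddCommGroup Z] [InnerProductSpace ℝ Z] [CompleteSpace Z]
    (f : X → ℝ) (g : Y → ℝ)
    (hfconv : ConvexOn ℝ Set.univ f) (hfcont : Continuous f)
    (hgconv : ConvexOn ℝ Set.univ g) (hgcont : Continuous g)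
    (A : X →L[ℝ] Z) (B : Y →L[ℝ] Z) (b : Z)
    (μf μg : ℝ) (hμf : 0 ≤ μf) (hμg : 0 ≤ μg)
    (hfS : ∀ x u v : X, (∀ w, f w - f x ≥ ⟪v, w - x⟫) →
        f u - f x - ⟪v, u - x⟫ ≥ μf / 2 * ‖u - x‖ ^ 2)
    (hgS : ∀ y u v : Y, (∀ w, g w - g y ≥ ⟪v, w - y⟫) →
        g u - g y - ⟪v, u - y⟫ ≥ μg / 2 * ‖u - y‖ ^ 2)
    (L : X → Y → Z → ℝ)
    (hL : ∀ x y l, L x y l = f x + g y + ⟪l, A x + B y - b⟫)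
    (δ γ : ℝ) (hδ : 0 < δ) (hγ : 0 < γ)
    (α β ε : ℕ → ℝ)
    (hα : ∀ k, 1 ≤ k → 0 < α k)
    (hβpos : ∀ k, 1 ≤ k → 0 < β k)
    (hβmono : ∀ k, 1 ≤ k → β k ≤ β (k + 1))
    (hεnn : ∀ k, 1 ≤ k → 0 ≤ ε k)
    (hβtop : Tendsto β atTop atTop)
    (x : ℕ → X) (y : ℕ → Y) (lam : ℕ → Z)
    (Zs Zd : ℕ → X) (Hs Hd : ℕ → Y)
    (hZ : ∀ k, 1 ≤ k → Zs (k + 1) = (1 / α k) • (x (k + 1) - x k) + γ • x (k + 1))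
    (hZd : ∀ k, 1 ≤ k → Zd (k + 1) = δ • Zs (k + 1) + (1 - δ * γ) • x (k + 1))
    (hH : ∀ k, 1 ≤ k → Hs (k + 1) = (1 / α k) • (y (k + 1) - y k) + γ • y (k + 1))
    (hHd : ∀ k, 1 ≤ k → Hd (k + 1) = δ • Hs (k + 1) + (1 - δ * γ) • y (k + 1))
    (hlam : ∀ k, 1 ≤ k → lam (k + 1) = lam k + (α k * β k) • (A (Zd (k + 1)) + B (Hd (k + 1)) - b))
    (hstep : ∀ k, 1 ≤ k → ∃ u v,
        (∀ w, f w - f (x (k + 1)) ≥ ⟪u, w - x (k + 1)⟫) ∧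
        (∀ w, g w - g (y (k + 1)) ≥ ⟪v, w - y (k + 1)⟫) ∧
        (1 / α k) • (Zs (k + 1) - Zs k) =
          -(β k • (u + (ContinuousLinearMap.adjoint A) (lam (k + 1)) + ε k • x (k + 1)
              - μf • (x (k + 1) - Zd (k + 1)))) ∧
        (1 / α k) • (Hs (k + 1) - Hs k) =
          -(β k • (v + (ContinuousLinearMap.adjoint B) (lam (k + 1)) + ε k • y (k + 1)
              - μg • (y (k + 1) - Hd (k + 1)))))
    (hδγ : δ * γ - 1 ≥ 0)
    (hββ : ∀ k, 1 ≤ k → δ * β (k + 1) ≤ δ * β k + α k * β k)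
    (hεmono : ∀ k, 1 ≤ k → ε (k + 1) ≤ ε k)
    (hsum : Summable (fun k => α k * β k * ε k))
    (xs : X) (ys : Y) (ls : Z)
    (hsaddle : ∀ x' y' l', L xs ys l' ≤ L xs ys ls ∧ L xs ys ls ≤ L x' y' ls)
    :
    (∃ C : ℝ, 0 < C ∧ ∀ k, 1 ≤ k →
        μf * ‖x k - xs‖ ^ 2 + μg * ‖y k - ys‖ ^ 2 ≤ C / β k) ∧
    Tendsto (fun k => μf * β k * ‖x (k + 1) - x k‖ ^ 2) atTop (𝓝 0) ∧
    Tendsto (fun k => μg * β k * ‖y (k + 1) - y k‖ ^ 2) atTop (𝓝 0) :=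
  trajectory_rates_strongly_convex_general f g A B b μf μg hμf hμg hfS hgS L hL δ γ hδ α β ε hα
    hβpos hεnn x y lam Zs Zd Hs Hd hZ hZd hH hHd hlam hstep hδγ hββ hεmono hsum xs ys ls hsaddle
end

section
/- Suppose Assumption 1 holds, f ∈ S⁰_{μ_f}(X) and g ∈ S⁰_{μ_g}(Y) with μ_f, μ_g ≥ 0, β_k → ∞, (ε_k) is nonincreasing with ε_k ≥ 0 and Σ_{k=1}^{∞} α_kε_k < +∞, and let (x_k, y_k, λ_k) be generated by the scheme (disc) with the implicit multiplier choice λ̄_{k+1} = λ̂_{k+1} = λ_{k+1} (Algorithm 1). Let (x*,y*,λ*) be a saddle point of L. Then lim_{k→∞} (L(x_k, y_k, λ*) − L(x*, y*, λ*)) = 0. -/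
/-!
Lyapunov argument. With `p_k = δ Z_k + (1 - δγ) x_k - x*`, `q_k = δ H_k + (1 - δγ) y_k - y*` and
`c_k = δ² β_k`, the energy
`E_k = 2 c_k (L(x_k, y_k, λ*) - L(x*, y*, λ*)) + ‖p_k‖² + ‖q_k‖² + δ ‖λ_k - λ*‖²
  + c_k ε_k (‖x_k‖² + ‖y_k‖²) + (c_k μ_f + δγ - 1) ‖x_k - x*‖² + (c_k μ_g + δγ - 1) ‖y_k - y*‖²`
satisfies `E_{k+1} ≤ E_k + δ α_k β_k ε_k (‖x*‖² + ‖y*‖²)`. After replacing `f` by `f + ⟪λ*, A ·⟫`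
and `g` by `g + ⟪λ*, B ·⟫`, each primal block is controlled by the strong subgradient inequality
at `x*` and at the previous iterate; the multiplier terms of the two blocks combine, through the
update of `λ` and `A x* + B y* = b`, into `δ (‖λ_k - λ*‖² - ‖λ_{k+1} - λ*‖²)`; and
`δ β_{k+1} ≤ δ β_k + α_k β_k` lets the weight move from `c_k` to `c_{k+1}`. Summing, `2 c_k` times
the gap is at most `E_1 + C ∑_{j<k} β_j α_j ε_j`, which is `o(β_k)` by Kronecker's lemma.
-/

open Filter Topology
open scoped RealInnerProductSpace

-- Kronecker's lemma, via Tannery's theorem.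
theorem tendsto_sum_mul_div_atTop_zero {β a : ℕ → ℝ} (hβ : Monotone β)
    (hβtop : Tendsto β atTop atTop) (ha : ∀ n, 0 ≤ a n) (hsum : Summable a) :
    Tendsto (fun n => (∑ i ∈ Finset.range n, β i * a i) / β n) atTop (𝓝 0) := by
  set w : ℕ → ℕ → ℝ := fun n i => if i < n then β i * a i / β n else 0
  have hw : ∀ n, ∑' i, w n i = (∑ i ∈ Finset.range n, β i * a i) / β n := by
    intro n
    rw [tsum_eq_sum (s := Finset.range n) fun i hi => if_neg (by simpa using hi), Finset.sum_div]
    exact Finset.sum_congr rfl fun i hi => if_pos (Finset.mem_range.mp hi)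
  have hlim : ∀ i, Tendsto (w · i) atTop (𝓝 0) := by
    intro i
    refine ((tendsto_const_nhds (x := β i * a i)).div_atTop hβtop).congr' ?_
    filter_upwards [eventually_gt_atTop i] with n hn
    exact (if_pos hn).symm
  have hbound : ∀ᶠ n in atTop, ∀ i, ‖w n i‖ ≤ a i := by
    filter_upwards [hβtop.eventually_ge_atTop (|β 0| + 1)] with n hn i
    by_cases hin : i < n
    · have hβn : 0 < β n := by linarith [abs_nonneg (β 0)]
      have hβi : |β i| ≤ β n := abs_le.mpr
        ⟨by linarith [neg_abs_le (β 0), hβ (Nat.zero_le i)], hβ hin.le⟩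
      simp only [w, if_pos hin, Real.norm_eq_abs, abs_div, abs_mul, abs_of_nonneg (ha i),
        abs_of_pos hβn]
      rw [div_le_iff₀ hβn]
      nlinarith [ha i]
    · simp [w, if_neg hin, ha i]
  simpa [hw] using tendsto_tsum_of_dominated_convergence hsum hlim hbound

theorem tendsto_zero_of_mul_le_of_succ_le {β a G V : ℕ → ℝ} (hβ : Monotone β)
    (hβtop : Tendsto β atTop atTop) (ha : ∀ n, 0 ≤ a n) (hsum : Summable a)
    (hV : ∀ n, V (n + 1) ≤ V n + β n * a n) (hGV : ∀ n, β n * G n ≤ V n) (hG₀ : ∀ n, 0 ≤ G n) :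
    Tendsto G atTop (𝓝 0) := by
  have hV_le : ∀ n, V n ≤ V 0 + ∑ i ∈ Finset.range n, β i * a i := by
    intro n
    induction n with
    | zero => simp
    | succ n ih => rw [Finset.sum_range_succ]; linarith [hV n]
  have hbound : Tendsto (fun n => V 0 / β n + (∑ i ∈ Finset.range n, β i * a i) / β n) atTop
      (𝓝 0) := by
    simpa using (tendsto_const_nhds.div_atTop hβtop).add
      (tendsto_sum_mul_div_atTop_zero hβ hβtop ha hsum)
  refine tendsto_of_tendsto_of_tendsto_of_le_of_le' tendsto_const_nhds hbound
    (Eventually.of_forall hG₀) ?_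
  filter_upwards [hβtop.eventually_gt_atTop 0] with n hn
  rw [← add_div, le_div_iff₀ hn, mul_comm]
  exact (hGV n).trans (hV_le n)

def IsSaddlePoint {X Y Z : Type*} (L : X → Y → Z → ℝ) (xs : X) (ys : Y) (ls : Z) : Prop :=
  ∀ x y l, L xs ys l ≤ L xs ys ls ∧ L xs ys ls ≤ L x y ls

theorem IsSaddlePoint.gap_nonneg {X Y Z : Type*} {L : X → Y → Z → ℝ} {xs : X} {ys : Y} {ls : Z}
    (h : IsSaddlePoint L xs ys ls) (x : X) (y : Y) : 0 ≤ L x y ls - L xs ys ls :=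
  sub_nonneg.mpr (h x y ls).2

section Energy

variable {X Y Z : Type*} [NormedAddCommGroup X] [NormedAddCommGroup Y] [NormedAddCommGroup Z]

noncomputable def primalEnergy (μ θ c ε : ℝ) (xs x p : X) : ℝ :=
  ‖p‖ ^ 2 + c * ε * ‖x‖ ^ 2 + (c * μ + θ) * ‖x - xs‖ ^ 2

theorem primalEnergy_nonneg {μ θ c ε : ℝ} (hμ : 0 ≤ μ) (hθ : 0 ≤ θ) (hc : 0 ≤ c) (hε : 0 ≤ ε)
    (xs x p : X) : 0 ≤ primalEnergy μ θ c ε xs x p := by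
  unfold primalEnergy
  positivity

theorem primalEnergy_mono {μ θ c c' ε ε' : ℝ} (hμ : 0 ≤ μ) (hc' : 0 ≤ c') (hε' : 0 ≤ ε')
    (hc : c' ≤ c) (hε : ε' ≤ ε) (xs x p : X) :
    primalEnergy μ θ c' ε' xs x p ≤ primalEnergy μ θ c ε xs x p := by
  have : 0 ≤ c := hc'.trans hc
  unfold primalEnergy
  gcongr

variable [InnerProductSpace ℝ X] [InnerProductSpace ℝ Y]

noncomputable def schemeEnergy (L : X → Y → Z → ℝ) (μf μg δ γ c ε : ℝ) (xs : X) (ys : Y) (ls : Z)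
    (x Zs : X) (y Hs : Y) (l : Z) : ℝ :=
  2 * c * (L x y ls - L xs ys ls)
    + primalEnergy μf (δ * γ - 1) c ε xs x (δ • Zs + (1 - δ * γ) • x - xs)
    + primalEnergy μg (δ * γ - 1) c ε ys y (δ • Hs + (1 - δ * γ) • y - ys)
    + δ * ‖l - ls‖ ^ 2

theorem two_mul_sub_le_schemeEnergy {L : X → Y → Z → ℝ} {μf μg δ γ c ε : ℝ} (hμf : 0 ≤ μf)
    (hμg : 0 ≤ μg) (hδ : 0 ≤ δ) (hδγ : 0 ≤ δ * γ - 1) (hc : 0 ≤ c) (hε : 0 ≤ ε) (xs : X) (ys : Y)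
    (ls : Z) (x Zs : X) (y Hs : Y) (l : Z) :
    2 * c * (L x y ls - L xs ys ls) ≤ schemeEnergy L μf μg δ γ c ε xs ys ls x Zs y Hs l := by
  unfold schemeEnergy
  linarith [primalEnergy_nonneg hμf hδγ hc hε xs x (δ • Zs + (1 - δ * γ) • x - xs),
    primalEnergy_nonneg hμg hδγ hc hε ys y (δ • Hs + (1 - δ * γ) • y - ys),
    mul_nonneg hδ (sq_nonneg ‖l - ls‖)]

variable [InnerProductSpace ℝ Z]

theorem sq_norm_sub_sq_norm_le_two_inner (a c : X) : ‖a‖ ^ 2 - ‖c‖ ^ 2 ≤ 2 * ⟪a - c, a⟫ := by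
  have h := norm_sub_sq_real a (a - c)
  rw [sub_sub_cancel, real_inner_comm] at h
  linarith [sq_nonneg ‖a - c‖]

def IsStrongSubgradient (μ : ℝ) (F : X → ℝ) (x u : X) : Prop :=
  ∀ z, F z - F x - ⟪u, z - x⟫ ≥ μ / 2 * ‖z - x‖ ^ 2

def lagrangian (f : X → ℝ) (g : Y → ℝ) (A : X →L[ℝ] Z) (B : Y →L[ℝ] Z) (b : Z)
    (x : X) (y : Y) (l : Z) : ℝ :=
  f x + g y + ⟪l, A x + B y - b⟫

section Lagrangian

variable {f : X → ℝ} {g : Y → ℝ} {A : X →L[ℝ] Z} {B : Y →L[ℝ] Z} {b : Z} {xs : X} {ys : Y}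
  {ls : Z}

theorem IsSaddlePoint.feasible (h : IsSaddlePoint (lagrangian f g A B b) xs ys ls) :
    A xs + B ys = b := by
  have hr : ⟪A xs + B ys - b, A xs + B ys - b⟫ ≤ 0 := by
    have := (h xs ys (ls + (A xs + B ys - b))).1
    simp only [lagrangian, inner_add_left] at this
    linarith
  exact sub_eq_zero.mp (real_inner_self_nonpos.mp hr)

theorem lagrangian_sub_eq_of_feasible (hfeas : A xs + B ys = b) (x : X) (y : Y) :
    lagrangian f g A B b x y ls - lagrangian f g A B b xs ys ls
      = (f x + ⟪ls, A x⟫ - (f xs + ⟪ls, A xs⟫)) + (g y + ⟪ls, B y⟫ - (g ys + ⟪ls, B ys⟫)) := by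
  simp only [lagrangian, ← hfeas, sub_self, inner_zero_right, inner_sub_right, inner_add_right]
  ring

end Lagrangian

theorem IsStrongSubgradient.add_inner_apply [CompleteSpace X] [CompleteSpace Z] {μ : ℝ}
    {f : X → ℝ} {x u : X} (h : IsStrongSubgradient μ f x u) (A : X →L[ℝ] Z) (l : Z) :
    IsStrongSubgradient μ (fun z => f z + ⟪l, A z⟫) x (u + ContinuousLinearMap.adjoint A l) := by
  intro z
  have := h z
  simp only [inner_add_left, ContinuousLinearMap.adjoint_inner_left, inner_sub_right] at this ⊢
  linarith

theorem multiplier_step_le [CompleteSpace X] [CompleteSpace Y] [CompleteSpace Z]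
    {A : X →L[ℝ] Z} {B : Y →L[ℝ] Z} {l l' ls : Z} {p : X} {q : Y} {s δ : ℝ}
    (hl : l' - l = s • (A p + B q)) (hδ : 0 ≤ δ) :
    δ * (‖l' - ls‖ ^ 2 - ‖l - ls‖ ^ 2)
      ≤ 2 * (δ * s) * (⟪ContinuousLinearMap.adjoint A (l' - ls), p⟫
        + ⟪ContinuousLinearMap.adjoint B (l' - ls), q⟫) := by
  have h := sq_norm_sub_sq_norm_le_two_inner (l' - ls) (l - ls)
  rw [sub_sub_sub_cancel_right, hl, real_inner_comm, real_inner_smul_right, inner_add_right,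
    ← ContinuousLinearMap.adjoint_inner_left, ← ContinuousLinearMap.adjoint_inner_left] at h
  nlinarith

theorem shifted_iterate_identities {α β ε μ δ γ : ℝ} {x x' xs Z Z' Zd' u w : X} (hα : α ≠ 0)
    (hZ' : Z' = (1 / α) • (x' - x) + γ • x') (hZd' : Zd' = δ • Z' + (1 - δ * γ) • x')
    (hstep : (1 / α) • (Z' - Z) = -(β • (u + w + ε • x' - μ • (x' - Zd')))) :
    Zd' - xs = x' - xs + (δ / α) • (x' - x) ∧
      Zd' - xs - (δ • Z + (1 - δ * γ) • x - xs)
        = -((δ * α * β) • (u + w + ε • x')) - (δ * γ - 1 + δ ^ 2 * β * μ) • (x' - x) := by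
  have hZd'_eq : Zd' = x' + (δ / α) • (x' - x) := by
    rw [hZd', hZ']
    module
  have hZ'Z : Z' - Z = -((α * β) • (u + w + ε • x' - μ • (x' - Zd'))) := by
    calc Z' - Z = α • ((1 / α) • (Z' - Z)) := by rw [smul_smul, mul_one_div_cancel hα, one_smul]
      _ = _ := by rw [hstep, smul_neg, smul_smul]
  refine ⟨by rw [hZd'_eq]; abel, ?_⟩
  calc Zd' - xs - (δ • Z + (1 - δ * γ) • x - xs)
      = δ • (Z' - Z) + (1 - δ * γ) • (x' - x) := by rw [hZd']; module
    _ = _ := by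
      rw [hZ'Z, hZd'_eq]
      match_scalars <;> field_simp <;> ring

theorem primalEnergy_step_le {F : X → ℝ} {μ θ c d t ε : ℝ} {x x' xs u w p p' : X}
    (hu : IsStrongSubgradient μ F x' u) (hμ : 0 ≤ μ) (hθ : 0 ≤ θ) (hd : 0 ≤ d) (ht : 0 ≤ t)
    (hε : 0 ≤ ε) (hc : c = t * d) (hp' : p' = x' - xs + t • (x' - x))
    (hdp : p' - p = -(d • (u + w + ε • x')) - (θ + c * μ) • (x' - x)) :
    primalEnergy μ θ (c + d) ε xs x' p' + 2 * (c + d) * (F x' - F xs)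
      ≤ primalEnergy μ θ c ε xs x p + 2 * c * (F x - F xs) + d * ε * ‖xs‖ ^ 2
        - 2 * d * ⟪w, p'⟫ := by
  have hnorm : ‖p'‖ ^ 2 - ‖p‖ ^ 2 ≤ 2 * ⟪p' - p, p'⟫ := sq_norm_sub_sq_norm_le_two_inner p' p
  have hinner : ∀ v, ⟪v, p'⟫ = ⟪v, x' - xs⟫ + t * ⟪v, x' - x⟫ := fun v => by
    rw [hp', inner_add_right, real_inner_smul_right]
  have hexpand : ⟪p' - p, p'⟫ = -d * ⟪u, p'⟫ - d * ⟪w, p'⟫ - d * ε * ⟪x', p'⟫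
      - (θ + c * μ) * ⟪x' - x, p'⟫ := by
    rw [hdp]
    simp only [inner_sub_left, inner_neg_left, real_inner_smul_left, inner_add_left]
    ring
  rw [hinner u, hinner x', hinner (x' - x), real_inner_self_eq_norm_sq] at hexpand
  have hu_xs : μ / 2 * ‖x' - xs‖ ^ 2 ≤ F xs - F x' + ⟪u, x' - xs⟫ := by
    have := hu xs
    rw [← neg_sub x' xs, inner_neg_right, norm_neg] at this
    linarith
  have hu_x : 0 ≤ F x - F x' + ⟪u, x' - x⟫ := by
    have := hu x
    rw [← neg_sub x' x, inner_neg_right, norm_neg] at this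
    nlinarith [sq_nonneg ‖x' - x‖]
  have hx'_xs : ‖x'‖ ^ 2 - ‖xs‖ ^ 2 ≤ 2 * ⟪x', x' - xs⟫ := by
    rw [real_inner_comm]; exact sq_norm_sub_sq_norm_le_two_inner x' xs
  have hx'_x : ‖x'‖ ^ 2 - ‖x‖ ^ 2 ≤ 2 * ⟪x', x' - x⟫ := by
    rw [real_inner_comm]; exact sq_norm_sub_sq_norm_le_two_inner x' x
  have hdist : ‖x' - xs‖ ^ 2 - ‖x - xs‖ ^ 2 ≤ 2 * ⟪x' - x, x' - xs⟫ := by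
    have := sq_norm_sub_sq_norm_le_two_inner (x' - xs) (x - xs)
    rwa [sub_sub_sub_cancel_right] at this
  have htd : 0 ≤ t * d := mul_nonneg ht hd
  have hκ : 0 ≤ θ + c * μ := by rw [hc]; positivity
  unfold primalEnergy
  subst hc
  linarith [mul_le_mul_of_nonneg_left hu_xs hd, mul_le_mul_of_nonneg_left hu_x htd,
    mul_le_mul_of_nonneg_left hx'_xs (mul_nonneg hd hε),
    mul_le_mul_of_nonneg_left hx'_x (mul_nonneg htd hε),
    mul_le_mul_of_nonneg_left hdist hκ, mul_nonneg (mul_nonneg hκ ht) (sq_nonneg ‖x' - x‖)]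

theorem energy_succ_le [CompleteSpace X] [CompleteSpace Y] [CompleteSpace Z]
    {f : X → ℝ} {g : Y → ℝ} {A : X →L[ℝ] Z} {B : Y →L[ℝ] Z} {b : Z} {xs : X} {ys : Y} {ls : Z}
    {μf μg δ γ α β β₁ ε ε₁ : ℝ} {x₀ x₁ Z₀ Z₁ Zd₁ u : X} {y₀ y₁ H₀ H₁ Hd₁ v : Y} {l₀ l₁ : Z}
    (hsaddle : IsSaddlePoint (lagrangian f g A B b) xs ys ls)
    (hu : IsStrongSubgradient μf f x₁ u) (hv : IsStrongSubgradient μg g y₁ v)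
    (hμf : 0 ≤ μf) (hμg : 0 ≤ μg) (hδ : 0 < δ) (hδγ : 0 ≤ δ * γ - 1)
    (hα : 0 < α) (hβ : 0 ≤ β) (hβ₁ : 0 ≤ β₁) (hε₁ : 0 ≤ ε₁) (hεε : ε₁ ≤ ε)
    (hββ : δ * β₁ ≤ δ * β + α * β)
    (hZ : Z₁ = (1 / α) • (x₁ - x₀) + γ • x₁) (hZd : Zd₁ = δ • Z₁ + (1 - δ * γ) • x₁)
    (hH : H₁ = (1 / α) • (y₁ - y₀) + γ • y₁) (hHd : Hd₁ = δ • H₁ + (1 - δ * γ) • y₁)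
    (hl : l₁ = l₀ + (α * β) • (A Zd₁ + B Hd₁ - b))
    (hxstep : (1 / α) • (Z₁ - Z₀) = -(β • (u + ContinuousLinearMap.adjoint A l₁ + ε • x₁
      - μf • (x₁ - Zd₁))))
    (hystep : (1 / α) • (H₁ - H₀) = -(β • (v + ContinuousLinearMap.adjoint B l₁ + ε • y₁
      - μg • (y₁ - Hd₁)))) :
    schemeEnergy (lagrangian f g A B b) μf μg δ γ (δ ^ 2 * β₁) ε₁ xs ys ls x₁ Z₁ y₁ H₁ l₁
      ≤ schemeEnergy (lagrangian f g A B b) μf μg δ γ (δ ^ 2 * β) ε xs ys ls x₀ Z₀ y₀ H₀ l₀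
        + δ * α * β * ε * (‖xs‖ ^ 2 + ‖ys‖ ^ 2) := by
  unfold schemeEnergy
  subst hZd hHd
  have hfeas := hsaddle.feasible
  have hε : 0 ≤ ε := hε₁.trans hεε
  have hd : 0 ≤ δ * α * β := by positivity
  have ht : 0 ≤ δ / α := by positivity
  have hc : δ ^ 2 * β = δ / α * (δ * α * β) := by field_simp
  have hc₁ : δ ^ 2 * β₁ ≤ δ ^ 2 * β + δ * α * β := by nlinarith
  -- the multiplier `ls` is absorbed into the primal functions
  obtain ⟨hp₁, hdp⟩ := shifted_iterate_identities (xs := xs)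
    (u := u + ContinuousLinearMap.adjoint A ls) (w := ContinuousLinearMap.adjoint A (l₁ - ls))
    (β := β) (ε := ε) (μ := μf) (δ := δ) hα.ne' hZ rfl
    (by rw [hxstep, map_sub, add_add_sub_cancel])
  obtain ⟨hq₁, hdq⟩ := shifted_iterate_identities (xs := ys)
    (u := v + ContinuousLinearMap.adjoint B ls) (w := ContinuousLinearMap.adjoint B (l₁ - ls))
    (β := β) (ε := ε) (μ := μg) (δ := δ) hα.ne' hH rfl
    (by rw [hystep, map_sub, add_add_sub_cancel])
  have hx := primalEnergy_step_le (hu.add_inner_apply A ls) hμf hδγ hd ht hε hc hp₁ hdp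
  have hy := primalEnergy_step_le (hv.add_inner_apply B ls) hμg hδγ hd ht hε hc hq₁ hdq
  have hl' : l₁ - l₀ = (α * β) • (A (δ • Z₁ + (1 - δ * γ) • x₁ - xs)
      + B (δ • H₁ + (1 - δ * γ) • y₁ - ys)) := by
    rw [hl, ← hfeas, map_sub, map_sub]
    module
  have hdual := multiplier_step_le (ls := ls) hl' hδ.le
  have hgap₁ := mul_le_mul_of_nonneg_right hc₁ (hsaddle.gap_nonneg x₁ y₁)
  simp only [lagrangian_sub_eq_of_feasible hfeas] at hgap₁ ⊢
  beta_reduce at hx hy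
  have hβ₁' : 0 ≤ δ ^ 2 * β₁ := by positivity
  linarith [primalEnergy_mono (θ := δ * γ - 1) hμf hβ₁' hε₁ hc₁ hεε xs x₁
      (δ • Z₁ + (1 - δ * γ) • x₁ - xs),
    primalEnergy_mono (θ := δ * γ - 1) hμg hβ₁' hε₁ hc₁ hεε ys y₁
      (δ • H₁ + (1 - δ * γ) • y₁ - ys)]

end Energy

theorem lagrangian_gap_tendsto_zero_general
    {X Y Z : Type*}
    [NormedAddCommGroup X] [InnerProductSpace ℝ X] [CompleteSpace X]
    [NormedAddCommGroup Y] [InnerProductSpace ℝ Y] [CompleteSpace Y]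
    [NormedAddCommGroup Z] [InnerProductSpace ℝ Z] [CompleteSpace Z]
    (f : X → ℝ) (g : Y → ℝ)
    (A : X →L[ℝ] Z) (B : Y →L[ℝ] Z) (b : Z)
    (μf μg : ℝ) (hμf : 0 ≤ μf) (hμg : 0 ≤ μg)
    (hfS : ∀ x u v : X, (∀ w, f w - f x ≥ ⟪v, w - x⟫) →
        f u - f x - ⟪v, u - x⟫ ≥ μf / 2 * ‖u - x‖ ^ 2)
    (hgS : ∀ y u v : Y, (∀ w, g w - g y ≥ ⟪v, w - y⟫) →
        g u - g y - ⟪v, u - y⟫ ≥ μg / 2 * ‖u - y‖ ^ 2)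
    (L : X → Y → Z → ℝ)
    (hL : ∀ x y l, L x y l = f x + g y + ⟪l, A x + B y - b⟫)
    (δ γ : ℝ) (hδ : 0 < δ)
    (α β ε : ℕ → ℝ)
    (hα : ∀ k, 1 ≤ k → 0 < α k)
    (hβpos : ∀ k, 1 ≤ k → 0 < β k)
    (hβmono : ∀ k, 1 ≤ k → β k ≤ β (k + 1))
    (hεnn : ∀ k, 1 ≤ k → 0 ≤ ε k)
    (hβtop : Tendsto β atTop atTop)
    (x : ℕ → X) (y : ℕ → Y) (lam : ℕ → Z)
    (Zs Zd : ℕ → X) (Hs Hd : ℕ → Y)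
    (hZ : ∀ k, 1 ≤ k → Zs (k + 1) = (1 / α k) • (x (k + 1) - x k) + γ • x (k + 1))
    (hZd : ∀ k, 1 ≤ k → Zd (k + 1) = δ • Zs (k + 1) + (1 - δ * γ) • x (k + 1))
    (hH : ∀ k, 1 ≤ k → Hs (k + 1) = (1 / α k) • (y (k + 1) - y k) + γ • y (k + 1))
    (hHd : ∀ k, 1 ≤ k → Hd (k + 1) = δ • Hs (k + 1) + (1 - δ * γ) • y (k + 1))
    (hlam : ∀ k, 1 ≤ k → lam (k + 1) = lam k + (α k * β k) • (A (Zd (k + 1)) + B (Hd (k + 1)) - b))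
    (hstep : ∀ k, 1 ≤ k → ∃ u v,
        (∀ w, f w - f (x (k + 1)) ≥ ⟪u, w - x (k + 1)⟫) ∧
        (∀ w, g w - g (y (k + 1)) ≥ ⟪v, w - y (k + 1)⟫) ∧
        (1 / α k) • (Zs (k + 1) - Zs k) =
          -(β k • (u + (ContinuousLinearMap.adjoint A) (lam (k + 1)) + ε k • x (k + 1)
              - μf • (x (k + 1) - Zd (k + 1)))) ∧
        (1 / α k) • (Hs (k + 1) - Hs k) =
          -(β k • (v + (ContinuousLinearMap.adjoint B) (lam (k + 1)) + ε k • y (k + 1)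
              - μg • (y (k + 1) - Hd (k + 1)))))
    (hδγ : δ * γ - 1 ≥ 0)
    (hββ : ∀ k, 1 ≤ k → δ * β (k + 1) ≤ δ * β k + α k * β k)
    (hεmono : ∀ k, 1 ≤ k → ε (k + 1) ≤ ε k)
    (hsum : Summable (fun k => α k * ε k))
    (xs : X) (ys : Y) (ls : Z)
    (hsaddle : ∀ x' y' l', L xs ys l' ≤ L xs ys ls ∧ L xs ys ls ≤ L x' y' ls)
    :
    Tendsto (fun k => L (x k) (y k) ls - L xs ys ls) atTop (𝓝 0) := by
  have hL' : L = lagrangian f g A B b := funext fun x => funext fun y => funext (hL x y)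
  subst hL'
  replace hsaddle : IsSaddlePoint (lagrangian f g A B b) xs ys ls := hsaddle
  set gap : ℕ → ℝ := fun k => lagrangian f g A B b (x k) (y k) ls - lagrangian f g A B b xs ys ls
  set E : ℕ → ℝ := fun k => schemeEnergy (lagrangian f g A B b) μf μg δ γ (δ ^ 2 * β k) (ε k)
    xs ys ls (x k) (Zs k) (y k) (Hs k) (lam k)
  have hE_succ : ∀ n, E (n + 1 + 1) ≤ E (n + 1)
      + β (n + 1) * (δ * (‖xs‖ ^ 2 + ‖ys‖ ^ 2) * (α (n + 1) * ε (n + 1))) := fun n => by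
    have hk : 1 ≤ n + 1 := Nat.le_add_left 1 n
    obtain ⟨u, v, hu, hv, hux, hvy⟩ := hstep (n + 1) hk
    refine (energy_succ_le hsaddle (fun z => hfS _ z u hu) (fun z => hgS _ z v hv) hμf hμg hδ hδγ
      (hα _ hk) (hβpos _ hk).le (hβpos _ (by omega)).le (hεnn _ (by omega)) (hεmono _ hk)
      (hββ _ hk) (hZ _ hk) (hZd _ hk) (hH _ hk) (hHd _ hk) (hlam _ hk) hux hvy).trans_eq (by ring)
  have hgap_le_E : ∀ n, β (n + 1) * (2 * δ ^ 2 * gap (n + 1)) ≤ E (n + 1) := fun n => by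
    have hk : 1 ≤ n + 1 := Nat.le_add_left 1 n
    have hc : 0 ≤ δ ^ 2 * β (n + 1) := by have := hβpos _ hk; positivity
    exact (two_mul_sub_le_schemeEnergy hμf hμg hδ.le hδγ hc (hεnn _ hk) ..).trans_eq' (by ring)
  have hscaled : Tendsto (fun n => 2 * δ ^ 2 * gap (n + 1)) atTop (𝓝 0) :=
    tendsto_zero_of_mul_le_of_succ_le (monotone_nat_of_le_succ fun n => hβmono _ (by omega))
      (hβtop.comp (tendsto_add_atTop_nat 1))
      (fun i => by have := hα (i + 1) (by omega); have := hεnn (i + 1) (by omega); positivity)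
      (((summable_nat_add_iff 1).mpr hsum).mul_left _) hE_succ hgap_le_E
      (fun n => by have := hsaddle.gap_nonneg (x (n + 1)) (y (n + 1)); positivity)
  have hδ2 : 2 * δ ^ 2 ≠ 0 := by positivity
  have hgap_succ := (hscaled.div_const (2 * δ ^ 2)).congr fun n => mul_div_cancel_left₀ _ hδ2
  rw [zero_div] at hgap_succ
  exact (tendsto_add_atTop_iff_nat 1).mp hgap_succ

theorem lagrangian_gap_tendsto_zero
    {X Y Z : Type*}
    [NormedAddCommGroup X] [InnerProductSpace ℝ X] [CompleteSpace X]
    [NormedAddCommGroup Y] [InnerProductSpace ℝ Y] [CompleteSpace Y]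
    [NormedAddCommGroup Z] [InnerProductSpace ℝ Z] [CompleteSpace Z]
    (f : X → ℝ) (g : Y → ℝ)
    (hfconv : ConvexOn ℝ Set.univ f) (hfcont : Continuous f)
    (hgconv : ConvexOn ℝ Set.univ g) (hgcont : Continuous g)
    (A : X →L[ℝ] Z) (B : Y →L[ℝ] Z) (b : Z)
    (μf μg : ℝ) (hμf : 0 ≤ μf) (hμg : 0 ≤ μg)
    (hfS : ∀ x u v : X, (∀ w, f w - f x ≥ ⟪v, w - x⟫) →
        f u - f x - ⟪v, u - x⟫ ≥ μf / 2 * ‖u - x‖ ^ 2)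
    (hgS : ∀ y u v : Y, (∀ w, g w - g y ≥ ⟪v, w - y⟫) →
        g u - g y - ⟪v, u - y⟫ ≥ μg / 2 * ‖u - y‖ ^ 2)
    (L : X → Y → Z → ℝ)
    (hL : ∀ x y l, L x y l = f x + g y + ⟪l, A x + B y - b⟫)
    (δ γ : ℝ) (hδ : 0 < δ) (hγ : 0 < γ)
    (α β ε : ℕ → ℝ)
    (hα : ∀ k, 1 ≤ k → 0 < α k)
    (hβpos : ∀ k, 1 ≤ k → 0 < β k)
    (hβmono : ∀ k, 1 ≤ k → β k ≤ β (k + 1))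
    (hεnn : ∀ k, 1 ≤ k → 0 ≤ ε k)
    (hβtop : Tendsto β atTop atTop)
    (x : ℕ → X) (y : ℕ → Y) (lam : ℕ → Z)
    (Zs Zd : ℕ → X) (Hs Hd : ℕ → Y)
    (hZ : ∀ k, 1 ≤ k → Zs (k + 1) = (1 / α k) • (x (k + 1) - x k) + γ • x (k + 1))
    (hZd : ∀ k, 1 ≤ k → Zd (k + 1) = δ • Zs (k + 1) + (1 - δ * γ) • x (k + 1))
    (hH : ∀ k, 1 ≤ k → Hs (k + 1) = (1 / α k) • (y (k + 1) - y k) + γ • y (k + 1))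
    (hHd : ∀ k, 1 ≤ k → Hd (k + 1) = δ • Hs (k + 1) + (1 - δ * γ) • y (k + 1))
    (hlam : ∀ k, 1 ≤ k → lam (k + 1) = lam k + (α k * β k) • (A (Zd (k + 1)) + B (Hd (k + 1)) - b))
    (hstep : ∀ k, 1 ≤ k → ∃ u v,
        (∀ w, f w - f (x (k + 1)) ≥ ⟪u, w - x (k + 1)⟫) ∧
        (∀ w, g w - g (y (k + 1)) ≥ ⟪v, w - y (k + 1)⟫) ∧
        (1 / α k) • (Zs (k + 1) - Zs k) =
          -(β k • (u + (ContinuousLinearMap.adjoint A) (lam (k + 1)) + ε k • x (k + 1)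
              - μf • (x (k + 1) - Zd (k + 1)))) ∧
        (1 / α k) • (Hs (k + 1) - Hs k) =
          -(β k • (v + (ContinuousLinearMap.adjoint B) (lam (k + 1)) + ε k • y (k + 1)
              - μg • (y (k + 1) - Hd (k + 1)))))
    (hδγ : δ * γ - 1 ≥ 0)
    (hββ : ∀ k, 1 ≤ k → δ * β (k + 1) ≤ δ * β k + α k * β k)
    (hεmono : ∀ k, 1 ≤ k → ε (k + 1) ≤ ε k)
    (hsum : Summable (fun k => α k * ε k))
    (xs : X) (ys : Y) (ls : Z)
    (hsaddle : ∀ x' y' l', L xs ys l' ≤ L xs ys ls ∧ L xs ys ls ≤ L x' y' ls)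
    :
    Tendsto (fun k => L (x k) (y k) ls - L xs ys ls) atTop (𝓝 0) :=
  lagrangian_gap_tendsto_zero_general f g A B b μf μg hμf hμg hfS hgS L hL δ γ hδ α β ε hα hβpos
    hβmono hεnn hβtop x y lam Zs Zd Hs Hd hZ hZd hH hHd hlam hstep hδγ hββ hεmono hsum xs ys ls
    hsaddle
end

section
/- Fix k ≥ 1 and suppose the pair (x_{k+1}, y_{k+1}) is a global minimizer over X × Y of the function (x, y) ↦ L_{θ_k}(x, y, λ̃_k) + (η_{f,k}/(2α_kβ_k))‖x − x̃_k‖² + (η_{g,k}/(2α_kβ_k))‖y − ỹ_k‖² + (ε_k/2)‖x‖² + (ε_k/2)‖y‖², and define Z_{k+1} = (γ + 1/α_k)x_{k+1} − (1/α_k)x_k, H_{k+1} = (γ + 1/α_k)y_{k+1} − (1/α_k)y_k, Z^δ_{k+1} = δZ_{k+1} + (1 − δγ)x_{k+1}, H^δ_{k+1} = δH_{k+1} + (1 − δγ)y_{k+1}, and λ_{k+1} = λ_k + α_kβ_k(AZ^δ_{k+1} + BH^δ_{k+1} − b). Then there exist a subgradient u_{k+1} of f at x_{k+1} and a subgradient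 v_{k+1} of g at y_{k+1} such that (Z_{k+1} − Z_k)/α_k = −β_k(u_{k+1} + A^Tλ_{k+1} + ε_kx_{k+1} − μ_f(x_{k+1} − Z^δ_{k+1})) and (H_{k+1} − H_k)/α_k = −β_k(v_{k+1} + B^Tλ_{k+1} + ε_ky_{k+1} − μ_g(y_{k+1} − H^δ_{k+1})); that is, one step of the primal-dual joint algorithm (Algorithm 1) satisfies the discretization scheme with the implicit multipliers λ̄_{k+1} = λ̂_{k+1} = λ_{k+1}. -/
open Filter Topology
open scoped RealInnerProductSpace

set_option maxHeartbeats 1000000 in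
open ContinuousLinearMap in
theorem key_subgrad {X Z : Type*} [NormedAddCommGroup X] [InnerProductSpace ℝ X] [CompleteSpace X]
    [NormedAddCommGroup Z] [InnerProductSpace ℝ Z] [CompleteSpace Z]
    (f : X → ℝ) (hf : ConvexOn ℝ Set.univ f)
    (A : X →L[ℝ] Z) (lt e : Z) (x1 xt : X) (θ c1 c2 : ℝ)
    (hθ : 0 ≤ θ) (hc1 : 0 ≤ c1) (hc2 : 0 ≤ c2)
    (hmin : ∀ x' : X, f x1 + ⟪lt, A x1⟫ + θ/2 * ‖A x1 - e‖^2 + c1 * ‖x1 - xt‖^2 + c2 * ‖x1‖^2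
        ≤ f x' + ⟪lt, A x'⟫ + θ/2 * ‖A x' - e‖^2 + c1 * ‖x' - xt‖^2 + c2 * ‖x'‖^2)
    (w : X) :
    f w - f x1 ≥ ⟪-((adjoint A) lt + θ • (adjoint A) (A x1 - e)
        + (2*c1) • (x1 - xt) + (2*c2) • x1), w - x1⟫ := by
  set d := w - x1 with hd
  set S : ℝ := ⟪(adjoint A) lt, d⟫ + θ * ⟪(adjoint A) (A x1 - e), d⟫
      + 2*c1 * ⟪x1 - xt, d⟫ + 2*c2 * ⟪x1, d⟫ with hS
  have hinner : ⟪-((adjoint A) lt + θ • (adjoint A) (A x1 - e)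
      + (2*c1) • (x1 - xt) + (2*c2) • x1), d⟫ = -S := by
    simp only [inner_neg_left, inner_add_left, real_inner_smul_left, hS]
    try ring
  rw [hinner]
  set Q : ℝ := θ/2 * ‖A d‖^2 + c1 * ‖d‖^2 + c2 * ‖d‖^2 with hQ
  have hQ0 : 0 ≤ Q := by positivity
  have hstep : ∀ t : ℝ, 0 < t → t ≤ 1 → -S - t * Q ≤ f w - f x1 := by
    intro t ht ht1
    have hxt' := hmin (x1 + t • d)
    have e1 : ⟪lt, A (x1 + t • d)⟫ = ⟪lt, A x1⟫ + t * ⟪(adjoint A) lt, d⟫ := by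
      rw [map_add, inner_add_right, map_smul, inner_smul_right, adjoint_inner_left]
    have e2 : ‖A (x1 + t • d) - e‖^2
        = ‖A x1 - e‖^2 + 2*t*⟪(adjoint A) (A x1 - e), d⟫ + t^2 * ‖A d‖^2 := by
      have h0 : A (x1 + t • d) - e = (A x1 - e) + t • (A d) := by
        rw [map_add, map_smul]; abel
      rw [h0, norm_add_sq_real, real_inner_smul_right, adjoint_inner_left, norm_smul]
      simp only [Real.norm_eq_abs, mul_pow, sq_abs]
      ring
    have e3 : ‖(x1 + t • d) - xt‖^2 = ‖x1 - xt‖^2 + 2*t*⟪x1 - xt, d⟫ + t^2 * ‖d‖^2 := by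
      have h0 : (x1 + t • d) - xt = (x1 - xt) + t • d := by abel
      rw [h0, norm_add_sq_real, real_inner_smul_right, norm_smul]
      simp only [Real.norm_eq_abs, mul_pow, sq_abs]
      ring
    have e4 : ‖x1 + t • d‖^2 = ‖x1‖^2 + 2*t*⟪x1, d⟫ + t^2 * ‖d‖^2 := by
      rw [norm_add_sq_real, real_inner_smul_right, norm_smul]
      simp only [Real.norm_eq_abs, mul_pow, sq_abs]
      ring
    rw [e1, e2, e3, e4] at hxt'
    have hconv : f (x1 + t • d) ≤ f x1 + t * (f w - f x1) := by
      have h := hf.2 (Set.mem_univ x1) (Set.mem_univ w)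
        (by linarith : (0:ℝ) ≤ 1 - t) (le_of_lt ht) (by ring)
      have hpt : (1-t) • x1 + t • w = x1 + t • d := by rw [hd]; module
      rw [hpt] at h
      simp only [smul_eq_mul] at h
      nlinarith [h]
    -- from hxt': f x1 ≤ f (x1+t•d) + t*S + t^2*Q
    have h2 : f x1 - t*S - t^2*Q ≤ f (x1 + t • d) := by
      simp only [hS, hQ]
      ring_nf at hxt' ⊢
      linarith
    have h3 : t * (-S - t*Q) ≤ t * (f w - f x1) := by nlinarith [h2, hconv]
    exact le_of_mul_le_mul_left h3 ht
  refine le_of_forall_pos_le_add ?_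
  intro ε hε
  have htpos : 0 < min 1 (ε/(Q+1)) := lt_min one_pos (by positivity)
  have h := hstep _ htpos (min_le_left _ _)
  have htQ : (min 1 (ε/(Q+1))) * Q ≤ ε := by
    have h1 : min 1 (ε/(Q+1)) ≤ ε/(Q+1) := min_le_right _ _
    have : (ε/(Q+1)) * Q ≤ ε := by
      rw [div_mul_eq_mul_div, div_le_iff₀ (by linarith)]
      nlinarith
    nlinarith [mul_le_mul_of_nonneg_right h1 hQ0]
  linarith


set_option maxHeartbeats 1000000 in
theorem algorithm1_step_satisfies_scheme
    {X Y Z : Type*}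
    [NormedAddCommGroup X] [InnerProductSpace ℝ X] [CompleteSpace X]
    [NormedAddCommGroup Y] [InnerProductSpace ℝ Y] [CompleteSpace Y]
    [NormedAddCommGroup Z] [InnerProductSpace ℝ Z] [CompleteSpace Z]
    (f : X → ℝ) (g : Y → ℝ)
    (hfconv : ConvexOn ℝ Set.univ f) (hfcont : Continuous f)
    (hgconv : ConvexOn ℝ Set.univ g) (hgcont : Continuous g)
    (A : X →L[ℝ] Z) (B : Y →L[ℝ] Z) (b : Z)
    (μf μg : ℝ) (hμf : 0 ≤ μf) (hμg : 0 ≤ μg)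
    (hfS : ∀ x u v : X, (∀ w, f w - f x ≥ ⟪v, w - x⟫) →
        f u - f x - ⟪v, u - x⟫ ≥ μf / 2 * ‖u - x‖ ^ 2)
    (hgS : ∀ y u v : Y, (∀ w, g w - g y ≥ ⟪v, w - y⟫) →
        g u - g y - ⟪v, u - y⟫ ≥ μg / 2 * ‖u - y‖ ^ 2)
    (δ γ : ℝ) (hδ : 0 < δ) (hγ : 0 < γ)
    (αk βk εk : ℝ) (hαk : 0 < αk) (hβk : 0 < βk) (hεk : 0 ≤ εk)
    (θk ηf ηg : ℝ)
    (hθk : θk = (αk + δ) * βk)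
    (hηf : ηf = γ + 1 / αk + μf * δ * βk)
    (hηg : ηg = γ + 1 / αk + μg * δ * βk)
    (xk x1 : X) (yk y1 : Y) (Zk Z1 Zd1 : X) (Hk H1 Hd1 : Y) (lamk lam1 : Z)
    (lt : Z) (xt : X) (yt : Y)
    (hlt : lt = lamk - (δ * βk) • (A xk + B yk - b))
    (hxt : xt = xk + (1 / ηf) • (Zk - γ • xk))
    (hyt : yt = yk + (1 / ηg) • (Hk - γ • yk))
    (hmin : ∀ x' : X, ∀ y' : Y,
        f x1 + g y1 + ⟪lt, A x1 + B y1 - b⟫ + θk / 2 * ‖A x1 + B y1 - b‖ ^ 2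
          + ηf / (2 * αk * βk) * ‖x1 - xt‖ ^ 2 + ηg / (2 * αk * βk) * ‖y1 - yt‖ ^ 2
          + εk / 2 * ‖x1‖ ^ 2 + εk / 2 * ‖y1‖ ^ 2 ≤
        f x' + g y' + ⟪lt, A x' + B y' - b⟫ + θk / 2 * ‖A x' + B y' - b‖ ^ 2
          + ηf / (2 * αk * βk) * ‖x' - xt‖ ^ 2 + ηg / (2 * αk * βk) * ‖y' - yt‖ ^ 2
          + εk / 2 * ‖x'‖ ^ 2 + εk / 2 * ‖y'‖ ^ 2)
    (hZ1 : Z1 = (γ + 1 / αk) • x1 - (1 / αk) • xk)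
    (hH1 : H1 = (γ + 1 / αk) • y1 - (1 / αk) • yk)
    (hZd1 : Zd1 = δ • Z1 + (1 - δ * γ) • x1)
    (hHd1 : Hd1 = δ • H1 + (1 - δ * γ) • y1)
    (hlam1 : lam1 = lamk + (αk * βk) • (A Zd1 + B Hd1 - b))
    :
    ∃ u v,
      (∀ w, f w - f x1 ≥ ⟪u, w - x1⟫) ∧
      (∀ w, g w - g y1 ≥ ⟪v, w - y1⟫) ∧
      (1 / αk) • (Z1 - Zk) =
        -(βk • (u + (ContinuousLinearMap.adjoint A) lam1 + εk • x1 - μf • (x1 - Zd1))) ∧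
      (1 / αk) • (H1 - Hk) =
        -(βk • (v + (ContinuousLinearMap.adjoint B) lam1 + εk • y1 - μg • (y1 - Hd1))) := by
  have hηf0 : 0 < ηf := by
    rw [hηf]; have h1 : 0 < 1/αk := by positivity
    nlinarith [mul_nonneg (mul_nonneg hμf hδ.le) hβk.le]
  have hηg0 : 0 < ηg := by
    rw [hηg]; have h1 : 0 < 1/αk := by positivity
    nlinarith [mul_nonneg (mul_nonneg hμg hδ.le) hβk.le]
  have hθ0 : 0 ≤ θk := by rw [hθk]; positivity
  have hc1f : 0 ≤ ηf/(2*αk*βk) := by positivity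
  have hc1g : 0 ≤ ηg/(2*αk*βk) := by positivity
  have hc2 : 0 ≤ εk/2 := by positivity
  have hminx : ∀ x' : X,
      f x1 + ⟪lt, A x1⟫ + θk/2 * ‖A x1 - (b - B y1)‖^2
        + ηf/(2*αk*βk) * ‖x1 - xt‖^2 + εk/2 * ‖x1‖^2
      ≤ f x' + ⟪lt, A x'⟫ + θk/2 * ‖A x' - (b - B y1)‖^2
        + ηf/(2*αk*βk) * ‖x' - xt‖^2 + εk/2 * ‖x'‖^2 := by
    intro x'
    have h := hmin x' y1
    have hv : ∀ x : X, A x + B y1 - b = A x - (b - B y1) := fun x => by abel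
    have hip : ∀ x : X, ⟪lt, A x + B y1 - b⟫ = ⟪lt, A x⟫ + ⟪lt, B y1 - b⟫ := fun x => by
      rw [add_sub_assoc, inner_add_right]
    rw [hip x1, hip x', hv x1, hv x'] at h
    linarith
  have hminy : ∀ y' : Y,
      g y1 + ⟪lt, B y1⟫ + θk/2 * ‖B y1 - (b - A x1)‖^2
        + ηg/(2*αk*βk) * ‖y1 - yt‖^2 + εk/2 * ‖y1‖^2
      ≤ g y' + ⟪lt, B y'⟫ + θk/2 * ‖B y' - (b - A x1)‖^2
        + ηg/(2*αk*βk) * ‖y' - yt‖^2 + εk/2 * ‖y'‖^2 := by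
    intro y'
    have h := hmin x1 y'
    have hv : ∀ y : Y, A x1 + B y - b = B y - (b - A x1) := fun y => by abel
    have hip : ∀ y : Y, ⟪lt, A x1 + B y - b⟫ = ⟪lt, B y⟫ + ⟪lt, A x1 - b⟫ := fun y => by
      rw [show A x1 + B y - b = B y + (A x1 - b) from by abel, inner_add_right]
    rw [hip y1, hip y', hv y1, hv y'] at h
    linarith
  have hu := fun w => key_subgrad f hfconv A lt (b - B y1) x1 xt θk (ηf/(2*αk*βk)) (εk/2)
    hθ0 hc1f hc2 hminx w
  have hv := fun w => key_subgrad g hgconv B lt (b - A x1) y1 yt θk (ηg/(2*αk*βk)) (εk/2)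
    hθ0 hc1g hc2 hminy w
  have hlam : lam1 = lt + θk • (A x1 + B y1 - b) := by
    rw [hlam1, hlt, hZd1, hHd1, hZ1, hH1, hθk]
    simp only [map_add, map_sub, map_smul]
    match_scalars <;> field_simp [hαk.ne', hβk.ne'] <;> ring
  have hadjA : (ContinuousLinearMap.adjoint A) lam1
      = (ContinuousLinearMap.adjoint A) lt
        + θk • (ContinuousLinearMap.adjoint A) (A x1 - (b - B y1)) := by
    rw [hlam, show A x1 + B y1 - b = A x1 - (b - B y1) from by abel, map_add, map_smul]
  have hadjB : (ContinuousLinearMap.adjoint B) lam1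
      = (ContinuousLinearMap.adjoint B) lt
        + θk • (ContinuousLinearMap.adjoint B) (B y1 - (b - A x1)) := by
    rw [hlam, show A x1 + B y1 - b = B y1 - (b - A x1) from by abel, map_add, map_smul]
  have hne : γ + 1 / αk + μf * δ * βk ≠ 0 := by rw [← hηf]; exact hηf0.ne'
  have hne' : γ + 1 / αk + μg * δ * βk ≠ 0 := by rw [← hηg]; exact hηg0.ne'
  refine ⟨_, _, hu, hv, ?_, ?_⟩
  · rw [hadjA, hZd1, hZ1, hxt, hηf]
    match_scalars <;> field_simp [hαk.ne', hβk.ne', hne] <;> ring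
  · rw [hadjB, hHd1, hH1, hyt, hηg]
    match_scalars <;> field_simp [hαk.ne', hβk.ne', hne'] <;> ring
end

section
/- Fix k ≥ 1 and suppose: x_{k+1} is a global minimizer over X of x ↦ L_{θ_k}(x, y_k, λ̃_{1,k}) + (η_{f,k}/(2α_kβ_k))‖x − x̃_k‖² + (ε_k/2)‖x‖², with Z_{k+1} = (x_{k+1} − x_k)/α_k + γx_{k+1} and Z^δ_{k+1} = δZ_{k+1} + (1 − δγ)x_{k+1}; then y_{k+1} is a global minimizer over Y of y ↦ L_{θ_k}(x_{k+1}, y, λ̃_{2,k}) + (η_{g,k}/(2α_kβ_k))‖y − ỹ_k‖² + (ε_k/2)‖y‖², with H_{k+1} = (y_{k+1} − y_k)/α_k + γy_{k+1} and H^δ_{k+1} = δH_{k+1} + (1 − δγ)y_{k+1}; and λ_{k+1} = λ_k + α_kβ_k(AZ^δ_{k+1} + BH^δ_{k+1} − b). Then, setting λ̄_{k+1} := λ_k + α_kβ_k(AZ^δ_{k+1} + BH^δ_k − b), there exist a subgradient u_{k+1} of f at x_{k+1} and a subgradient v_{k+1} of g at y_{k+1} such that (Z_{k+1} − Z_k)/α_k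 = −β_k(u_{k+1} + A^Tλ̄_{k+1} + ε_kx_{k+1} − μ_f(x_{k+1} − Z^δ_{k+1})) and (H_{k+1} − H_k)/α_k = −β_k(v_{k+1} + B^Tλ_{k+1} + ε_ky_{k+1} − μ_g(y_{k+1} − H^δ_{k+1})); that is, one step of the primal-dual splitting algorithm (Algorithm 2) satisfies the discretization scheme with the semi-implicit multipliers λ̄_{k+1} as above and λ̂_{k+1} = λ_{k+1}. -/
set_option maxHeartbeats 1000000

open Filter Topology
open scoped RealInnerProductSpace

lemma subgrad_of_min {X : Type*} [NormedAddCommGroup X] [InnerProductSpace ℝ X]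
    (f φ : X → ℝ) (hf : ConvexOn ℝ Set.univ f) (x1 p : X) (q : X → ℝ)
    (hexp : ∀ (t : ℝ) (d : X), φ (x1 + t • d) = φ x1 + t * ⟪p, d⟫ + t ^ 2 * q d)
    (hmin : ∀ x', f x1 + φ x1 ≤ f x' + φ x') :
    ∀ w, f w - f x1 ≥ ⟪-p, w - x1⟫ := by
  intro w
  rw [inner_neg_left]
  set d := w - x1 with hd
  have key : ∀ t : ℝ, 0 < t → t ≤ 1 → 0 ≤ (f w - f x1 + ⟪p, d⟫) + t * q d := by
    intro t ht ht1
    have hcomb : x1 + t • d = (1 - t) • x1 + t • w := by rw [hd]; module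
    have hconv := hf.2 (Set.mem_univ x1) (Set.mem_univ w)
      (by linarith : (0:ℝ) ≤ 1 - t) ht.le (by ring)
    have hm := hmin (x1 + t • d)
    rw [hexp t d, hcomb] at hm
    simp only [smul_eq_mul] at hconv
    have h3 : t * 0 ≤ t * ((f w - f x1 + ⟪p, d⟫) + t * q d) := by nlinarith [hconv, hm]
    exact le_of_mul_le_mul_left h3 ht
  by_contra hcon
  push_neg at hcon
  set c := f w - f x1 + ⟪p, d⟫ with hc
  have hcneg : c < 0 := by linarith
  set Q := q d with hQ
  have hQ1 : (0:ℝ) < |Q| + 1 := by positivity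
  have hcpos : 0 < -c := by linarith
  set t := min 1 ((-c) / (2 * (|Q| + 1))) with htdef
  have ht0 : 0 < t := lt_min one_pos (div_pos hcpos (by positivity))
  have ht1 : t ≤ 1 := min_le_left _ _
  have h2 := key t ht0 ht1
  have htq : t * Q ≤ (-c) / 2 := by
    calc t * Q ≤ t * |Q| := mul_le_mul_of_nonneg_left (le_abs_self Q) ht0.le
      _ ≤ ((-c) / (2 * (|Q| + 1))) * (|Q| + 1) :=
          mul_le_mul (min_le_right _ _) (by linarith) (abs_nonneg Q) (by positivity)
      _ = (-c) / 2 := by field_simp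
  linarith

lemma quad_exp {X Z : Type*} [NormedAddCommGroup X] [InnerProductSpace ℝ X] [CompleteSpace X]
    [NormedAddCommGroup Z] [InnerProductSpace ℝ Z] [CompleteSpace Z]
    (A : X →L[ℝ] Z) (l c : Z) (θ ρ e : ℝ) (s x1 d : X) (t : ℝ) :
    ⟪l, A (x1 + t • d) + c⟫ + θ / 2 * ‖A (x1 + t • d) + c‖ ^ 2
      + ρ * ‖(x1 + t • d) - s‖ ^ 2 + e * ‖x1 + t • d‖ ^ 2
    = (⟪l, A x1 + c⟫ + θ / 2 * ‖A x1 + c‖ ^ 2 + ρ * ‖x1 - s‖ ^ 2 + e * ‖x1‖ ^ 2)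
      + t * ⟪ContinuousLinearMap.adjoint A l + θ • ContinuousLinearMap.adjoint A (A x1 + c)
          + (2 * ρ) • (x1 - s) + (2 * e) • x1, d⟫
      + t ^ 2 * (θ / 2 * ‖A d‖ ^ 2 + (ρ + e) * ‖d‖ ^ 2) := by
  have h1 : A (x1 + t • d) + c = (A x1 + c) + t • A d := by
    rw [map_add, map_smul]; abel
  have h2 : (x1 + t • d) - s = (x1 - s) + t • d := by abel
  rw [h1, h2]
  simp only [norm_add_sq_real, inner_add_right, inner_add_left, real_inner_smul_left,
    real_inner_smul_right, ContinuousLinearMap.adjoint_inner_left, norm_smul,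
    Real.norm_eq_abs, mul_pow, sq_abs]
  ring

theorem algorithm2_step_satisfies_scheme
    {X Y Z : Type*}
    [NormedAddCommGroup X] [InnerProductSpace ℝ X] [CompleteSpace X]
    [NormedAddCommGroup Y] [InnerProductSpace ℝ Y] [CompleteSpace Y]
    [NormedAddCommGroup Z] [InnerProductSpace ℝ Z] [CompleteSpace Z]
    (f : X → ℝ) (g : Y → ℝ)
    (hfconv : ConvexOn ℝ Set.univ f) (hfcont : Continuous f)
    (hgconv : ConvexOn ℝ Set.univ g) (hgcont : Continuous g)
    (A : X →L[ℝ] Z) (B : Y →L[ℝ] Z) (b : Z)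
    (μf μg : ℝ) (hμf : 0 ≤ μf) (hμg : 0 ≤ μg)
    (hfS : ∀ x u v : X, (∀ w, f w - f x ≥ ⟪v, w - x⟫) →
        f u - f x - ⟪v, u - x⟫ ≥ μf / 2 * ‖u - x‖ ^ 2)
    (hgS : ∀ y u v : Y, (∀ w, g w - g y ≥ ⟪v, w - y⟫) →
        g u - g y - ⟪v, u - y⟫ ≥ μg / 2 * ‖u - y‖ ^ 2)
    (δ γ : ℝ) (hδ : 0 < δ) (hγ : 0 < γ)
    (αk βk εk : ℝ) (hαk : 0 < αk) (hβk : 0 < βk) (hεk : 0 ≤ εk)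
    (θk ηf ηg : ℝ)
    (hθk : θk = (αk + δ) * βk)
    (hηf : ηf = γ + 1 / αk + μf * δ * βk)
    (hηg : ηg = γ + 1 / αk + μg * δ * βk)
    (xk x1 : X) (yk y1 : Y) (Zk Z1 Zd1 : X) (Hk Hdk H1 Hd1 : Y) (lamk lam1 lbar : Z)
    (lt1 lt2 : Z) (xt : X) (yt : Y)
    (hlt1 : lt1 = lamk - (δ * βk) • (A xk + B yk - b) + (δ * αk * βk) • B (Hk - γ • yk))
    (hlt2 : lt2 = lamk - (δ * βk) • (A xk + B yk - b))
    (hxt : xt = xk + (1 / ηf) • (Zk - γ • xk))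
    (hyt : yt = yk + (1 / ηg) • (Hk - γ • yk))
    (hHdk : Hdk = δ • Hk + (1 - δ * γ) • yk)
    (hminx : ∀ x' : X,
        f x1 + g yk + ⟪lt1, A x1 + B yk - b⟫ + θk / 2 * ‖A x1 + B yk - b‖ ^ 2
          + ηf / (2 * αk * βk) * ‖x1 - xt‖ ^ 2 + εk / 2 * ‖x1‖ ^ 2 ≤
        f x' + g yk + ⟪lt1, A x' + B yk - b⟫ + θk / 2 * ‖A x' + B yk - b‖ ^ 2
          + ηf / (2 * αk * βk) * ‖x' - xt‖ ^ 2 + εk / 2 * ‖x'‖ ^ 2)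
    (hZ1 : Z1 = (1 / αk) • (x1 - xk) + γ • x1)
    (hZd1 : Zd1 = δ • Z1 + (1 - δ * γ) • x1)
    (hminy : ∀ y' : Y,
        f x1 + g y1 + ⟪lt2, A x1 + B y1 - b⟫ + θk / 2 * ‖A x1 + B y1 - b‖ ^ 2
          + ηg / (2 * αk * βk) * ‖y1 - yt‖ ^ 2 + εk / 2 * ‖y1‖ ^ 2 ≤
        f x1 + g y' + ⟪lt2, A x1 + B y' - b⟫ + θk / 2 * ‖A x1 + B y' - b‖ ^ 2
          + ηg / (2 * αk * βk) * ‖y' - yt‖ ^ 2 + εk / 2 * ‖y'‖ ^ 2)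
    (hH1 : H1 = (1 / αk) • (y1 - yk) + γ • y1)
    (hHd1 : Hd1 = δ • H1 + (1 - δ * γ) • y1)
    (hlam1 : lam1 = lamk + (αk * βk) • (A Zd1 + B Hd1 - b))
    (hlbar : lbar = lamk + (αk * βk) • (A Zd1 + B Hdk - b))
    :
    ∃ u v,
      (∀ w, f w - f x1 ≥ ⟪u, w - x1⟫) ∧
      (∀ w, g w - g y1 ≥ ⟪v, w - y1⟫) ∧
      (1 / αk) • (Z1 - Zk) =
        -(βk • (u + (ContinuousLinearMap.adjoint A) lbar + εk • x1 - μf • (x1 - Zd1))) ∧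
      (1 / αk) • (H1 - Hk) =
        -(βk • (v + (ContinuousLinearMap.adjoint B) lam1 + εk • y1 - μg • (y1 - Hd1))) := by
  have hα0 : αk ≠ 0 := ne_of_gt hαk
  have hβ0 : βk ≠ 0 := ne_of_gt hβk
  have h1α : 0 < 1 / αk := by positivity
  have hmf : 0 ≤ μf * δ * βk := by positivity
  have hmg : 0 ≤ μg * δ * βk := by positivity
  have hηf0 : ηf ≠ 0 := by rw [hηf]; nlinarith
  have hηg0 : ηg ≠ 0 := by rw [hηg]; nlinarith
  have hEf0 : γ * αk + 1 + μf * δ * βk * αk ≠ 0 := by nlinarith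
  have hEg0 : γ * αk + 1 + μg * δ * βk * αk ≠ 0 := by nlinarith
  set rx : Z := B yk - b with hrx
  set ry : Z := A x1 - b with hry
  have e1x : ∀ x : X, A x + B yk - b = A x + rx := fun x => by rw [hrx]; abel
  have e1y : ∀ y : Y, A x1 + B y - b = B y + ry := fun y => by rw [hry]; abel
  set px : X := ContinuousLinearMap.adjoint A lt1
      + θk • ContinuousLinearMap.adjoint A (A x1 + rx)
      + (2 * (ηf / (2 * αk * βk))) • (x1 - xt) + (2 * (εk / 2)) • x1 with hpx
  set py : Y := ContinuousLinearMap.adjoint B lt2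
      + θk • ContinuousLinearMap.adjoint B (B y1 + ry)
      + (2 * (ηg / (2 * αk * βk))) • (y1 - yt) + (2 * (εk / 2)) • y1 with hpy
  have hu : ∀ w, f w - f x1 ≥ ⟪-px, w - x1⟫ := by
    apply subgrad_of_min f
      (fun x => ⟪lt1, A x + rx⟫ + θk / 2 * ‖A x + rx‖ ^ 2
        + ηf / (2 * αk * βk) * ‖x - xt‖ ^ 2 + εk / 2 * ‖x‖ ^ 2)
      hfconv x1 px
      (fun d => θk / 2 * ‖A d‖ ^ 2 + (ηf / (2 * αk * βk) + εk / 2) * ‖d‖ ^ 2)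
    · intro t d
      simpa [hpx] using quad_exp A lt1 rx θk (ηf / (2 * αk * βk)) (εk / 2) xt x1 d t
    · intro x'
      have h := hminx x'
      rw [e1x x1, e1x x'] at h
      linarith
  have hv : ∀ w, g w - g y1 ≥ ⟪-py, w - y1⟫ := by
    apply subgrad_of_min g
      (fun y => ⟪lt2, B y + ry⟫ + θk / 2 * ‖B y + ry‖ ^ 2
        + ηg / (2 * αk * βk) * ‖y - yt‖ ^ 2 + εk / 2 * ‖y‖ ^ 2)
      hgconv y1 py
      (fun d => θk / 2 * ‖B d‖ ^ 2 + (ηg / (2 * αk * βk) + εk / 2) * ‖d‖ ^ 2)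
    · intro t d
      simpa [hpy] using quad_exp B lt2 ry θk (ηg / (2 * αk * βk)) (εk / 2) yt y1 d t
    · intro y'
      have h := hminy y'
      rw [e1y y1, e1y y'] at h
      linarith
  refine ⟨-px, -py, hu, hv, ?_, ?_⟩
  · have hZc : lt1 + θk • (A x1 + rx) - lbar = 0 := by
      rw [hrx, hlt1, hlbar, hZd1, hZ1, hHdk, hθk]
      simp only [map_add, map_sub, map_smul]
      match_scalars <;> field_simp <;> ring
    have hlb : lbar = lt1 + θk • (A x1 + rx) := (sub_eq_zero.mp hZc).symm
    have hadj : ContinuousLinearMap.adjoint A lbar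
        = ContinuousLinearMap.adjoint A lt1
          + θk • ContinuousLinearMap.adjoint A (A x1 + rx) := by
      rw [hlb, map_add, map_smul]
    have hxtv : x1 - xt = (x1 - xk) - (1 / ηf) • (Zk - γ • xk) := by
      rw [hxt, sub_add_eq_sub_sub]
    rw [hpx, hadj, hxtv, hZd1, hZ1, hηf]
    match_scalars <;> field_simp <;> ring
  · have hYc : lt2 + θk • (B y1 + ry) - lam1 = 0 := by
      rw [hry, hlt2, hlam1, hZd1, hZ1, hHd1, hH1, hθk]
      simp only [map_add, map_sub, map_smul]
      match_scalars <;> field_simp <;> ring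
    have hlb : lam1 = lt2 + θk • (B y1 + ry) := (sub_eq_zero.mp hYc).symm
    have hadj : ContinuousLinearMap.adjoint B lam1
        = ContinuousLinearMap.adjoint B lt2
          + θk • ContinuousLinearMap.adjoint B (B y1 + ry) := by
      rw [hlb, map_add, map_smul]
    have hytv : y1 - yt = (y1 - yk) - (1 / ηg) • (Hk - γ • yk) := by
      rw [hyt, sub_add_eq_sub_sub]
    rw [hpy, hadj, hytv, hHd1, hH1, hηg]
    match_scalars <;> field_simp <;> ring
end
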